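/- arXiv:1907.00576 — 5 statements merged into one kernel-verified Lean document; each statement's English description precedes it below -/
import Mathlib

section
/- The approximation problem for additive random fields with Korobov kernels is polynomially tractable under the absolute error criterion: there exist non-negative constants C, p, q such that for all d ∈ ℕ and all ε ∈ (0,1), n^{ABS}(ε,d) ≤ C · d^q · ε^{−p}. -/
open Filter Set

set_option linter.unnecessarySimpa false
set_option maxHeartbeats 1000000

private lemma antitone_sum_le_range {f : ℕ → ℝ} (hf : Antitone f) (h0 : ∀ n, 0 ≤ f n) :
    ∀ (n : ℕ) (F : Finset ℕ), F.card ≤ n → ∑ m ∈ F, f m ≤ ∑ m ∈ Finset.range n, f m := by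
  intro n
  induction n with
  | zero =>
    intro F hF
    rw [Nat.le_zero, Finset.card_eq_zero] at hF
    subst hF; simp
  | succ n ih =>
    intro F hF
    rcases Nat.lt_or_ge F.card (n + 1) with h | h
    · refine (ih F (by omega)).trans
        (Finset.sum_le_sum_of_subset_of_nonneg
          (Finset.range_subset_range.2 (Nat.le_succ n)) (fun m _ _ => h0 m))
    · have hcard : F.card = n + 1 := le_antisymm hF h
      have hne : F.Nonempty := Finset.card_pos.mp (by omega)
      have hMF : F.max' hne ∈ F := F.max'_mem hne
      have hsub : F ⊆ Finset.range (F.max' hne + 1) := fun x hx =>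
        Finset.mem_range.2 (Nat.lt_succ_of_le (F.le_max' x hx))
      have hMn : n ≤ F.max' hne := by
        have := Finset.card_le_card hsub
        rw [Finset.card_range] at this; omega
      have h1 : (F.erase (F.max' hne)).card ≤ n := by
        rw [Finset.card_erase_of_mem hMF]; omega
      calc ∑ m ∈ F, f m = f (F.max' hne) + ∑ m ∈ F.erase (F.max' hne), f m :=
            (Finset.add_sum_erase F f hMF).symm
        _ ≤ f n + ∑ m ∈ Finset.range n, f m := add_le_add (hf hMn) (ih _ h1)
        _ = ∑ m ∈ Finset.range (n + 1), f m := by rw [Finset.sum_range_succ]; ring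

private lemma hasSum_sum_type {γ δ : Type*} {f : γ ⊕ δ → ℝ} {a b : ℝ}
    (ha : HasSum (fun x => f (Sum.inl x)) a) (hb : HasSum (fun x => f (Sum.inr x)) b) :
    HasSum f (a + b) :=
  HasSum.add_isCompl Set.isCompl_range_inl_range_inr
    (Sum.inl_injective.hasSum_range_iff.2 ha) (Sum.inr_injective.hasSum_range_iff.2 hb)

/-- Real Riemann zeta function `ζ(s) = ∑_{k=1}^∞ k^{-s}` (as a real tsum). -/
noncomputable def zetaR (s : ℝ) : ℝ := ∑' k : ℕ, 1 / ((k : ℝ) + 1) ^ s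

/-- The eigenvalue family `Λ_d` of the additive Korobov covariance operator:
the value `∑_{j=1}^d α_j` (index `Sum.inl`), together with, for each
`j ∈ {1,…,d}` and each `k ≥ 1`, the value `β_j / k^{σ_j}` with multiplicity 2. -/
noncomputable def korobovVal (α β σ : ℕ → ℝ) (d : ℕ) :
    Unit ⊕ (Fin d × ℕ × Fin 2) → ℝ :=
  fun i =>
    match i with
    | Sum.inl _ => ∑ j ∈ Finset.Icc 1 d, α j
    | Sum.inr ⟨j, k, _⟩ => β ((j : ℕ) + 1) / ((k : ℝ) + 1) ^ σ ((j : ℕ) + 1)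

/-- Information complexity under the absolute error criterion:
`n^{ABS}(ε) = min{n ≥ 0 : ∑_{m > n} λ_m ≤ ε²}`, where `lam m` denotes the
`(m+1)`-st member `λ_{m+1}` of the non-increasing sequence. -/
noncomputable def nABS (lam : ℕ → ℝ) (ε : ℝ) : ℕ :=
  sInf {n : ℕ | ∑' m : ℕ, lam (n + m) ≤ ε ^ 2}

/-- Information complexity under the normalized error criterion:
`n^{NOR}(ε) = min{n ≥ 0 : ∑_{m > n} λ_m ≤ ε² ∑_{m ≥ 1} λ_m}`. -/
noncomputable def nNOR (lam : ℕ → ℝ) (ε : ℝ) : ℕ :=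
  sInf {n : ℕ | ∑' m : ℕ, lam (n + m) ≤ ε ^ 2 * ∑' m : ℕ, lam m}

/-- (Theorem 2.1(i), ABS part.) The approximation problem for
additive random fields with Korobov kernels is polynomially tractable under the
absolute error criterion: there exist non-negative `C, p, q` such that
`n^{ABS}(ε,d) ≤ C d^q ε^{-p}` for all `d ≥ 1` and `ε ∈ (0,1)`. -/
theorem korobov_PT_ABS (α β σ : ℕ → ℝ) (lam : ℕ → ℕ → ℝ)
    (hα : ∀ j : ℕ, 1 ≤ j → 0 ≤ α j)
    (hβ1 : β 1 ≤ 1)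
    (hβpos : ∀ j : ℕ, 1 ≤ j → 0 < β j)
    (hβmono : ∀ j : ℕ, 1 ≤ j → β (j + 1) ≤ β j)
    (hσ1 : 1 < σ 1)
    (hσmono : ∀ j : ℕ, 1 ≤ j → σ j ≤ σ (j + 1))
    (hrearr : ∀ d : ℕ, 1 ≤ d → Antitone (lam d) ∧
      ∃ e : ℕ ≃ (Unit ⊕ (Fin d × ℕ × Fin 2)),
        ∀ m : ℕ, lam d m = korobovVal α β σ d (e m))
    (hsum : ∀ d : ℕ, 1 ≤ d → Summable (lam d))
    :
    ∃ C p q : ℝ, 0 ≤ C ∧ 0 ≤ p ∧ 0 ≤ q ∧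
      ∀ d : ℕ, 1 ≤ d → ∀ ε : ℝ, ε ∈ Set.Ioo (0 : ℝ) 1 →
        (nABS (lam d) ε : ℝ) ≤ C * (d : ℝ) ^ q * ε ^ (-p) := by
  set s : ℝ := σ 1 with hs_def
  set θ : ℝ := (s - 1) / 2 with hθ_def
  set s' : ℝ := (s + 1) / 2 with hs'_def
  have hθpos : (0 : ℝ) < θ := by rw [hθ_def]; linarith
  have hs'1 : 1 < s' := by rw [hs'_def]; linarith
  set zt : ℕ → ℝ := fun k => ((k : ℝ) + 1) ^ (-s') with hzt
  have hztnn : ∀ k, 0 ≤ zt k := fun k => Real.rpow_nonneg (by positivity) _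
  have hztsum : Summable zt := by
    have h1 : Summable (fun n : ℕ => 1 / ((n : ℝ)) ^ s') :=
      Real.summable_one_div_nat_rpow.2 hs'1
    have h2 := (summable_nat_add_iff 1).2 h1
    refine h2.congr fun k => ?_
    push_cast
    rw [show zt k = ((k : ℝ) + 1) ^ (-s') from rfl,
      Real.rpow_neg (by positivity), one_div]
  set Z : ℝ := ∑' k, zt k with hZ_def
  have hZ1 : (1 : ℝ) ≤ Z := by
    have h0 : zt 0 = 1 := by simp [hzt]
    calc (1 : ℝ) = zt 0 := h0.symm
      _ ≤ Z := Summable.le_tsum hztsum 0 (fun j _ => hztnn j)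
  have hZpos : (0 : ℝ) < Z := lt_of_lt_of_le one_pos hZ1
  set p : ℝ := 2 / θ with hp_def
  set q : ℝ := 1 + 1 / θ with hq_def
  set A : ℝ := (2 * Z) ^ (1 / θ) with hA_def
  have hA0 : 0 ≤ A := Real.rpow_nonneg (by positivity) _
  have hppos : (0 : ℝ) < p := by rw [hp_def]; exact div_pos two_pos hθpos
  have hinvθ : (0 : ℝ) < 1 / θ := div_pos one_pos hθpos
  have hq0 : (0 : ℝ) ≤ q := by rw [hq_def]; linarith
  refine ⟨2 * A + 3, p, q, by linarith, hppos.le, hq0, ?_⟩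
  intro d hd ε hε
  obtain ⟨hε0, hε1⟩ := hε
  have hdpos : (0 : ℝ) < d := by exact_mod_cast hd
  obtain ⟨hanti, e, he⟩ := hrearr d hd
  set V := korobovVal α β σ d with hV_def
  have hVnonneg : ∀ i, 0 ≤ V i := by
    rintro (u | ⟨j, k, t⟩)
    · exact Finset.sum_nonneg fun j hj => hα j (Finset.mem_Icc.mp hj).1
    · exact div_nonneg (hβpos _ (Nat.le_add_left 1 j)).le
        (Real.rpow_nonneg (by positivity) _)
  have hLsum : Summable (lam d) := hsum d hd
  have hVsum : Summable V := e.summable_iff.mp (hLsum.congr fun m => he m)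
  have hLnn : ∀ m, 0 ≤ lam d m := fun m => (he m) ▸ hVnonneg (e m)
  set g : Fin d → ℕ → ℝ :=
    fun j k => β ((j : ℕ) + 1) / ((k : ℝ) + 1) ^ σ ((j : ℕ) + 1) with hg_def
  have hgnn : ∀ j k, 0 ≤ g j k := fun j k =>
    div_nonneg (hβpos _ (Nat.le_add_left 1 j)).le (Real.rpow_nonneg (by positivity) _)
  have hσge : ∀ j : ℕ, s ≤ σ (j + 1) := by
    intro j
    induction j with
    | zero => simp [hs_def]
    | succ j ih => exact ih.trans (hσmono (j + 1) (by omega))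
  have hβle1 : ∀ j : ℕ, β (j + 1) ≤ 1 := by
    intro j
    induction j with
    | zero => exact hβ1
    | succ j ih => exact (hβmono (j + 1) (by omega)).trans ih
  have key : ∀ (j : Fin d) (N k : ℕ), g j (N + k) ≤ ((N : ℝ) + 1) ^ (-θ) * zt k := by
    intro j N k
    have hx0 : (0 : ℝ) < ((N + k : ℕ) : ℝ) + 1 := by positivity
    have hx1 : (1 : ℝ) ≤ ((N + k : ℕ) : ℝ) + 1 := by
      have := Nat.cast_nonneg (α := ℝ) (N + k); linarith
    have hsplit : -s = -θ + -s' := by rw [hθ_def, hs'_def]; ring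
    calc g j (N + k) = β ((j : ℕ) + 1) / (((N + k : ℕ) : ℝ) + 1) ^ σ ((j : ℕ) + 1) := rfl
      _ ≤ 1 / (((N + k : ℕ) : ℝ) + 1) ^ σ ((j : ℕ) + 1) :=
          (div_le_div_iff_of_pos_right (Real.rpow_pos_of_pos hx0 _)).mpr (hβle1 _)
      _ = (((N + k : ℕ) : ℝ) + 1) ^ (-(σ ((j : ℕ) + 1))) := by
          rw [Real.rpow_neg hx0.le, one_div]
      _ ≤ (((N + k : ℕ) : ℝ) + 1) ^ (-s) :=
          Real.rpow_le_rpow_of_exponent_le hx1 (by linarith [hσge (j : ℕ)])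
      _ = (((N + k : ℕ) : ℝ) + 1) ^ (-θ) * (((N + k : ℕ) : ℝ) + 1) ^ (-s') := by
          rw [hsplit, Real.rpow_add hx0]
      _ ≤ ((N : ℝ) + 1) ^ (-θ) * zt k := by
          refine mul_le_mul ?_ ?_ (Real.rpow_nonneg hx0.le _)
            (Real.rpow_nonneg (by positivity) _)
          · refine Real.rpow_le_rpow_of_nonpos (by positivity) ?_ (by linarith)
            push_cast; linarith
          · refine Real.rpow_le_rpow_of_nonpos (by positivity) ?_ (by linarith)
            push_cast; linarith
  have hgsum : ∀ j : Fin d, Summable (g j) := by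
    intro j
    refine Summable.of_nonneg_of_le (hgnn j) (fun k => ?_) hztsum
    simpa using key j 0 k
  -- choice of N
  set X : ℝ := (2 * (d : ℝ) * Z / ε ^ 2) ^ (1 / θ) with hX_def
  have hB : (0 : ℝ) < 2 * (d : ℝ) * Z / ε ^ 2 := by positivity
  have hX0 : 0 < X := Real.rpow_pos_of_pos hB _
  set N : ℕ := ⌈X⌉₊ with hN_def
  have hNX : X ≤ (N : ℝ) := Nat.le_ceil X
  have hNle : (N : ℝ) ≤ X + 1 := (Nat.ceil_lt_add_one hX0.le).le
  -- finsets
  set S : Finset (Fin d × ℕ × Fin 2) :=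
    Finset.univ ×ˢ (Finset.range N ×ˢ Finset.univ) with hS_def
  set emb : (Fin d × ℕ × Fin 2) ↪ (Unit ⊕ (Fin d × ℕ × Fin 2)) :=
    ⟨Sum.inr, Sum.inr_injective⟩ with hemb_def
  set T : Finset (Unit ⊕ (Fin d × ℕ × Fin 2)) :=
    insert (Sum.inl ()) (S.map emb) with hT_def
  have hnotmem : Sum.inl () ∉ S.map emb := by simp [hemb_def]
  have hTcard : T.card = d * (N * 2) + 1 := by
    rw [hT_def, Finset.card_insert_of_notMem hnotmem, Finset.card_map, hS_def]
    simp [Finset.card_product]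
  -- the tail bound
  set Vr : Fin d × ℕ × Fin 2 → ℝ := fun x => V (Sum.inr x) with hVr_def
  have hVrsum : Summable Vr := hVsum.comp_injective Sum.inr_injective
  have hVrg : ∀ (j : Fin d) (k : ℕ) (t : Fin 2), Vr (j, k, t) = g j k := fun _ _ _ => rfl
  have hsum_jk : ∀ j : Fin d, Summable (fun y : ℕ × Fin 2 => Vr (j, y)) :=
    fun j => hVrsum.prod_factor j
  have h1 : ∑' x, Vr x = ∑ j : Fin d, ∑' y : ℕ × Fin 2, Vr (j, y) := by
    rw [Summable.tsum_prod' hVrsum hsum_jk, tsum_fintype]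
  have h2 : ∀ j : Fin d, ∑' y : ℕ × Fin 2, Vr (j, y) = 2 * ∑' k, g j k := by
    intro j
    rw [Summable.tsum_prod' (hsum_jk j) (fun k => (hasSum_fintype (fun t : Fin 2 => Vr (j, k, t))).summable)]
    have : ∀ k : ℕ, ∑' t : Fin 2, Vr (j, k, t) = 2 * g j k := by
      intro k
      rw [tsum_fintype]
      simp [hVrg]
    rw [tsum_congr this, tsum_mul_left]
  have h3 : ∑ x ∈ S, Vr x = ∑ j : Fin d, 2 * ∑ k ∈ Finset.range N, g j k := by
    rw [hS_def, Finset.sum_product]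
    refine Finset.sum_congr rfl fun j _ => ?_
    rw [Finset.sum_product, Finset.mul_sum]
    refine Finset.sum_congr rfl fun k _ => ?_
    simp [hVrg]
  have hVsplit : ∑' i, V i = V (Sum.inl ()) + ∑' x, Vr x := by
    have ha : HasSum (fun u : Unit => V (Sum.inl u)) (V (Sum.inl ())) := by
      simpa using hasSum_fintype (fun u : Unit => V (Sum.inl u))
    exact (hasSum_sum_type ha hVrsum.hasSum).tsum_eq
  have hTsum : ∑ i ∈ T, V i = V (Sum.inl ()) + ∑ x ∈ S, Vr x := by
    rw [hT_def, Finset.sum_insert hnotmem, Finset.sum_map]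
    rfl
  -- per-j tail bound
  have hjtail : ∀ j : Fin d,
      ∑' k, g j k - ∑ k ∈ Finset.range N, g j k ≤ ((N : ℝ) + 1) ^ (-θ) * Z := by
    intro j
    have heq := Summable.sum_add_tsum_nat_add (f := g j) N (hgsum j)
    have hsl : Summable (fun k => g j (k + N)) := (summable_nat_add_iff N).2 (hgsum j)
    have hle : ∑' k, g j (k + N) ≤ ((N : ℝ) + 1) ^ (-θ) * Z := by
      calc ∑' k, g j (k + N) ≤ ∑' k, ((N : ℝ) + 1) ^ (-θ) * zt k := by
            refine Summable.tsum_le_tsum (fun k => ?_) hsl (hztsum.mul_left _)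
            rw [add_comm k N]; exact key j N k
        _ = ((N : ℝ) + 1) ^ (-θ) * Z := by rw [tsum_mul_left]
    linarith
  -- assemble the tail bound
  have htail : ∑' m, lam d (T.card + m) ≤ 2 * (d : ℝ) * Z * ((N : ℝ) + 1) ^ (-θ) := by
    have eq1 := Summable.sum_add_tsum_nat_add (f := lam d) T.card hLsum
    have eqt : ∑' m, lam d (T.card + m) = ∑' m, lam d (m + T.card) :=
      tsum_congr fun m => by rw [add_comm]
    have eq2 : ∑' m, lam d m = ∑' i, V i := by
      rw [tsum_congr he]; exact e.tsum_eq V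
    set F : Finset ℕ := T.map e.symm.toEmbedding with hF_def
    have hFcard : F.card = T.card := by rw [hF_def, Finset.card_map]
    have ineqF : ∑ m ∈ F, lam d m ≤ ∑ m ∈ Finset.range T.card, lam d m :=
      antitone_sum_le_range hanti hLnn T.card F (le_of_eq hFcard)
    have eqF : ∑ m ∈ F, lam d m = ∑ i ∈ T, V i := by
      rw [hF_def, Finset.sum_map]
      exact Finset.sum_congr rfl fun i _ => by
        rw [he]; simp
    have step1 : ∑' m, lam d (T.card + m) ≤ ∑' x, Vr x - ∑ x ∈ S, Vr x := by
      rw [eqt]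
      have : ∑' m, lam d (m + T.card) = ∑' m, lam d m - ∑ m ∈ Finset.range T.card, lam d m := by
        linarith [eq1]
      rw [this, eq2, hVsplit]
      have e5 := ineqF
      rw [eqF, hTsum] at e5
      linarith
    have step2 : ∑' x, Vr x - ∑ x ∈ S, Vr x ≤ 2 * (d : ℝ) * Z * ((N : ℝ) + 1) ^ (-θ) := by
      rw [h1, h3, ← Finset.sum_sub_distrib]
      have hbound : ∀ j : Fin d, ∑' y : ℕ × Fin 2, Vr (j, y) - 2 * ∑ k ∈ Finset.range N, g j k
          ≤ 2 * (((N : ℝ) + 1) ^ (-θ) * Z) := by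
        intro j
        rw [h2 j]
        have := hjtail j
        nlinarith [hjtail j]
      calc ∑ j : Fin d, (∑' y : ℕ × Fin 2, Vr (j, y) - 2 * ∑ k ∈ Finset.range N, g j k)
          ≤ ∑ _j : Fin d, 2 * (((N : ℝ) + 1) ^ (-θ) * Z) :=
            Finset.sum_le_sum fun j _ => hbound j
        _ = 2 * (d : ℝ) * Z * ((N : ℝ) + 1) ^ (-θ) := by
            rw [Finset.sum_const, Finset.card_univ, Fintype.card_fin, nsmul_eq_mul]
            ring
    linarith
  -- choice of N makes the tail ≤ ε²
  have hchoice : 2 * (d : ℝ) * Z * ((N : ℝ) + 1) ^ (-θ) ≤ ε ^ 2 := by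
    have hb1 : ((N : ℝ) + 1) ^ (-θ) ≤ X ^ (-θ) :=
      Real.rpow_le_rpow_of_nonpos hX0 (by linarith) (by linarith)
    have hb2 : X ^ (-θ) = ε ^ 2 / (2 * (d : ℝ) * Z) := by
      rw [hX_def, ← Real.rpow_mul hB.le]
      have hexp : 1 / θ * (-θ) = -1 := by field_simp
      rw [hexp, Real.rpow_neg_one, inv_div]
    have hpos : (0 : ℝ) < 2 * (d : ℝ) * Z := by positivity
    calc 2 * (d : ℝ) * Z * ((N : ℝ) + 1) ^ (-θ)
        ≤ 2 * (d : ℝ) * Z * (ε ^ 2 / (2 * (d : ℝ) * Z)) := by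
          rw [← hb2]; exact mul_le_mul_of_nonneg_left hb1 hpos.le
      _ = ε ^ 2 := by field_simp
  have hmem : T.card ∈ {n : ℕ | ∑' m : ℕ, lam d (n + m) ≤ ε ^ 2} :=
    htail.trans hchoice
  have hnABS : nABS (lam d) ε ≤ T.card := Nat.sInf_le hmem
  -- final numeric estimate
  have hXval : X = A * (d : ℝ) ^ (1 / θ) * ε ^ (-p) := by
    have e0 : 2 * (d : ℝ) * Z / ε ^ 2 = (2 * Z) * (d : ℝ) / ε ^ 2 := by ring
    have e1 : X = ((2 * Z) * (d : ℝ)) ^ (1 / θ) / (ε ^ 2) ^ (1 / θ) := by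
      rw [hX_def, e0, Real.div_rpow (by positivity) (by positivity)]
    have e2 : ((2 * Z) * (d : ℝ)) ^ (1 / θ) = A * (d : ℝ) ^ (1 / θ) := by
      rw [Real.mul_rpow (by positivity) (by positivity), hA_def]
    have e3 : (ε ^ 2 : ℝ) ^ (1 / θ) = ε ^ p := by
      rw [← Real.rpow_natCast ε 2, ← Real.rpow_mul hε0.le, hp_def]
      norm_num [div_eq_mul_inv]
    rw [e1, e2, e3, Real.rpow_neg hε0.le, div_eq_mul_inv]
  have hdq : (d : ℝ) ^ q = (d : ℝ) * (d : ℝ) ^ (1 / θ) := by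
    rw [hq_def, Real.rpow_add hdpos, Real.rpow_one]
  have hE1 : (1 : ℝ) ≤ ε ^ (-p) :=
    Real.one_le_rpow_of_pos_of_le_one_of_nonpos hε0 hε1.le (neg_nonpos.mpr hppos.le)
  have hD1 : (1 : ℝ) ≤ (d : ℝ) ^ (1 / θ) :=
    Real.one_le_rpow (by exact_mod_cast hd) hinvθ.le
  have hd1 : (1 : ℝ) ≤ (d : ℝ) := by exact_mod_cast hd
  calc (nABS (lam d) ε : ℝ) ≤ (T.card : ℝ) := by exact_mod_cast hnABS
    _ = (d : ℝ) * ((N : ℝ) * 2) + 1 := by rw [hTcard]; push_cast; ring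
    _ ≤ (d : ℝ) * ((X + 1) * 2) + 1 := by nlinarith
    _ = 2 * (d : ℝ) * X + 2 * (d : ℝ) + 1 := by ring
    _ ≤ (2 * A + 3) * (d : ℝ) ^ q * ε ^ (-p) := by
        rw [hXval, hdq]
        nlinarith [mul_le_mul hD1 hE1 zero_le_one (by positivity : (0:ℝ) ≤ (d:ℝ) ^ (1/θ)),
          mul_pos hdpos (lt_of_lt_of_le one_pos (le_trans hD1 (le_mul_of_one_le_right (by positivity) hE1)))]
end

section
/- The approximation problem for additive random fields with Korobov kernels is polynomially tractable under the normalized error criterion: there exist non-negative constants C, p, q such that for all d ∈ ℕ and all ε ∈ (0,1), n^{NOR}(ε,d) ≤ C · d^q · ε^{−p}. -/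
open Filter Set

private lemma summable_shift_rpow {r : ℝ} (hr : 1 < r) :
    Summable (fun k : ℕ => ((k:ℝ)+1) ^ (-r)) := by
  have h1 : Summable (fun n : ℕ => (n:ℝ) ^ (-r)) := Real.summable_nat_rpow.2 (by linarith)
  have h2 := (summable_nat_add_iff 1).2 h1
  simpa using h2

set_option maxHeartbeats 2000000 in
/-- (Theorem 2.1(i), NOR part.) -/
theorem korobov_PT_NOR (α β σ : ℕ → ℝ) (lam : ℕ → ℕ → ℝ)
    (hα : ∀ j : ℕ, 1 ≤ j → 0 ≤ α j)
    (hβ1 : β 1 ≤ 1)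
    (hβpos : ∀ j : ℕ, 1 ≤ j → 0 < β j)
    (hβmono : ∀ j : ℕ, 1 ≤ j → β (j + 1) ≤ β j)
    (hσ1 : 1 < σ 1)
    (hσmono : ∀ j : ℕ, 1 ≤ j → σ j ≤ σ (j + 1))
    (hrearr : ∀ d : ℕ, 1 ≤ d → Antitone (lam d) ∧
      ∃ e : ℕ ≃ (Unit ⊕ (Fin d × ℕ × Fin 2)),
        ∀ m : ℕ, lam d m = korobovVal α β σ d (e m))
    (hsum : ∀ d : ℕ, 1 ≤ d → Summable (lam d))
    :
    ∃ C p q : ℝ, 0 ≤ C ∧ 0 ≤ p ∧ 0 ≤ q ∧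
      ∀ d : ℕ, 1 ≤ d → ∀ ε : ℝ, ε ∈ Set.Ioo (0 : ℝ) 1 →
        (nNOR (lam d) ε : ℝ) ≤ C * (d : ℝ) ^ q * ε ^ (-p) := by
  classical
  have hσpos : (0:ℝ) < σ 1 := by linarith
  set τ : ℝ := (σ 1 + 1) / (2 * σ 1) with hτdef
  have hτpos : 0 < τ := div_pos (by linarith) (by linarith)
  have hτlt : τ < 1 := by
    rw [hτdef, div_lt_one (by linarith)]; linarith
  set u : ℝ := 1 / τ with hudef
  have hu1 : 1 < u := by
    rw [hudef, lt_div_iff₀ hτpos]; linarith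
  have hτu : τ * u = 1 := by
    rw [hudef]; field_simp
  set δ : ℝ := (u - 1) / 2 with hδdef
  have hδpos : 0 < δ := by rw [hδdef]; linarith
  set r₁ : ℝ := (u + 1) / 2 with hr₁def
  have hr₁ : 1 < r₁ := by rw [hr₁def]; linarith
  have huδ : -u = -δ + -r₁ := by rw [hδdef, hr₁def]; ring
  have hr₀ : 1 < τ * σ 1 := by
    have : τ * σ 1 = (σ 1 + 1) / 2 := by rw [hτdef]; field_simp
    rw [this]; linarith
  have hZ₀sum : Summable (fun k : ℕ => ((k:ℝ)+1) ^ (-(τ * σ 1))) := summable_shift_rpow hr₀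
  set Z₀ : ℝ := ∑' k : ℕ, ((k:ℝ)+1) ^ (-(τ * σ 1)) with hZ₀def
  have hZ₀nonneg : 0 ≤ Z₀ :=
    tsum_nonneg fun k => Real.rpow_nonneg (by positivity) _
  have hZ₁sum : Summable (fun k : ℕ => ((k:ℝ)+1) ^ (-r₁)) := summable_shift_rpow hr₁
  set Z₁ : ℝ := ∑' k : ℕ, ((k:ℝ)+1) ^ (-r₁) with hZ₁def
  have hZ₁nonneg : 0 ≤ Z₁ :=
    tsum_nonneg fun k => Real.rpow_nonneg (by positivity) _
  set K : ℝ := 2 * Z₀ with hKdef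
  have hK0 : 0 ≤ K := by rw [hKdef]; linarith
  have hβ1pos : 0 < β 1 := hβpos 1 le_rfl
  set A : ℝ := (K ^ u * Z₁ / (2 * β 1)) ^ (1/δ) with hAdef
  have hAnonneg : 0 ≤ A :=
    Real.rpow_nonneg (div_nonneg (mul_nonneg (Real.rpow_nonneg hK0 _) hZ₁nonneg) (by linarith)) _
  have hβle : ∀ j : ℕ, 1 ≤ j → β j ≤ β 1 := by
    intro j hj
    induction j, hj using Nat.le_induction with
    | base => exact le_rfl
    | succ n hn ih => exact (hβmono n hn).trans ih
  have hσge : ∀ j : ℕ, 1 ≤ j → σ 1 ≤ σ j := by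
    intro j hj
    induction j, hj using Nat.le_induction with
    | base => exact le_rfl
    | succ n hn ih => exact ih.trans (hσmono n hn)
  refine ⟨A + 2, 2/δ, u/δ, by linarith, le_of_lt (by positivity), le_of_lt (by positivity), ?_⟩
  intro d hd ε hε
  obtain ⟨hε0, hε1⟩ := hε
  obtain ⟨hanti, e, he⟩ := hrearr d hd
  have hlam0 : ∀ m, 0 ≤ lam d m := by
    intro m
    rw [he m]
    rcases h : e m with _ | ⟨j, k, i⟩
    · exact Finset.sum_nonneg fun j hj => hα j (Finset.mem_Icc.1 hj).1
    · exact div_nonneg (hβpos _ (by omega)).le (Real.rpow_nonneg (by positivity) _)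
  set f : Fin d × ℕ × Fin 2 → ℝ := fun x => (korobovVal α β σ d (Sum.inr x)) ^ τ with hfdef
  have hf0 : ∀ x, 0 ≤ f x := by
    rintro ⟨j, k, i⟩
    exact Real.rpow_nonneg
      (div_nonneg (hβpos _ (by omega)).le (Real.rpow_nonneg (by positivity) _)) _
  set G : Fin d × ℕ × Fin 2 → ℝ := fun x => ((x.2.1:ℝ)+1) ^ (-(τ * σ 1)) with hGdef
  have hG0 : ∀ x, 0 ≤ G x := fun x => Real.rpow_nonneg (by positivity) _
  have hfG : ∀ x, f x ≤ G x := by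
    rintro ⟨j, k, i⟩
    have hj1 : 1 ≤ (j:ℕ) + 1 := by omega
    have hb0 : 0 < β ((j:ℕ)+1) := hβpos _ hj1
    have hb1 : β ((j:ℕ)+1) ≤ 1 := (hβle _ hj1).trans hβ1
    have hk1 : (1:ℝ) ≤ (k:ℝ)+1 := by
      have : (0:ℝ) ≤ (k:ℝ) := Nat.cast_nonneg k
      linarith
    have hk0 : (0:ℝ) < (k:ℝ)+1 := by linarith
    have hc : (0:ℝ) < ((k:ℝ)+1) ^ σ ((j:ℕ)+1) := Real.rpow_pos_of_pos hk0 _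
    show (β ((j:ℕ)+1) / ((k:ℝ)+1) ^ σ ((j:ℕ)+1)) ^ τ ≤ ((k:ℝ)+1) ^ (-(τ * σ 1))
    rw [Real.div_rpow hb0.le hc.le, Real.rpow_neg hk0.le, ← one_div]
    have h2 : (((k:ℝ)+1) ^ σ ((j:ℕ)+1)) ^ τ = ((k:ℝ)+1) ^ (σ ((j:ℕ)+1) * τ) :=
      (Real.rpow_mul hk0.le _ _).symm
    have h3 : ((k:ℝ)+1) ^ (τ * σ 1) ≤ (((k:ℝ)+1) ^ σ ((j:ℕ)+1)) ^ τ := by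
      rw [h2]
      exact Real.rpow_le_rpow_of_exponent_le hk1
        (by nlinarith [hσge ((j:ℕ)+1) hj1])
    exact div_le_div₀ (by norm_num)
      (Real.rpow_le_one hb0.le hb1 hτpos.le)
      (Real.rpow_pos_of_pos hk0 _) h3
  have hHsum : Summable (fun y : ℕ × Fin 2 => ((y.1:ℝ)+1) ^ (-(τ * σ 1))) := by
    rw [summable_prod_of_nonneg (fun y => Real.rpow_nonneg (by positivity) _)]
    constructor
    · intro k
      exact Summable.of_finite
    · apply Summable.congr (hZ₀sum.mul_left 2)
      intro k
      rw [tsum_fintype]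
      simp [Finset.sum_const, two_mul]
  have hGsum : Summable G := by
    rw [hGdef, summable_prod_of_nonneg (fun x => Real.rpow_nonneg (by positivity) _)]
    constructor
    · intro j
      exact hHsum
    · exact Summable.of_finite
  have h2Z : ∀ k : ℕ, (∑' _ : Fin 2, ((k:ℝ)+1) ^ (-(τ * σ 1)))
      = 2 * ((k:ℝ)+1) ^ (-(τ * σ 1)) := by
    intro k
    rw [tsum_fintype, Finset.sum_const, Finset.card_univ, Fintype.card_fin, nsmul_eq_mul]
    norm_num
  have hH : (∑' y : ℕ × Fin 2, ((y.1:ℝ)+1) ^ (-(τ * σ 1))) = 2 * Z₀ := by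
    rw [Summable.tsum_prod' hHsum (fun k => Summable.of_finite), hZ₀def, ← tsum_mul_left]
    exact tsum_congr h2Z
  have hGval : ∑' x, G x = K * d := by
    have h0 : ∑' x, G x = ∑' (j : Fin d), ∑' y : ℕ × Fin 2, G (j, y) := Summable.tsum_prod' hGsum (fun j => hHsum)
    have hrew : (∑' (j : Fin d), ∑' y : ℕ × Fin 2, G (j, y)) = ∑' (_ : Fin d), (2*Z₀) :=
      tsum_congr fun j => hH
    rw [h0, hrew, tsum_fintype, Finset.sum_const, Finset.card_univ, Fintype.card_fin,
      nsmul_eq_mul, hKdef]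
    ring
  have hfsum : Summable f := Summable.of_nonneg_of_le hf0 hfG hGsum
  have hfle : ∑' x, f x ≤ K * d := hGval ▸ Summable.tsum_le_tsum hfG hfsum hGsum
  have key : ∀ M : ℕ, 1 ≤ M → (M:ℝ) * (lam d M) ^ τ ≤ K * d := by
    intro M hM
    set T : Finset ℕ := (Finset.range (M+1)).filter (fun i => (e i).isRight) with hTdef
    have hTcard : M ≤ T.card := by
      have h1 : ((Finset.range (M+1)).filter (fun i => ¬ (e i).isRight)).card ≤ 1 := by
        refine Finset.card_le_one.2 ?_
        intro a ha b hb
        rw [Finset.mem_filter] at ha hb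
        apply e.injective
        rcases h : e a with u | y
        · rcases h' : e b with v | z
          · exact congrArg Sum.inl (Subsingleton.elim u v)
          · rw [h'] at hb; simp at hb
        · rw [h] at ha; simp at ha
      have h2 := Finset.card_filter_add_card_filter_not
        (s := Finset.range (M+1)) (p := fun i => (e i).isRight)
      rw [Finset.card_range] at h2
      rw [← hTdef] at h2
      omega
    have hmemT : ∀ i ∈ T, i ≤ M := by
      intro i hi
      have := (Finset.mem_filter.1 hi).1
      rw [Finset.mem_range] at this
      omega
    have hstep1 : (M:ℝ) * (lam d M) ^ τ ≤ ∑ i ∈ T, (lam d i) ^ τ := by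
      have hb : ∀ i ∈ T, (lam d M) ^ τ ≤ (lam d i) ^ τ := fun i hi =>
        Real.rpow_le_rpow (hlam0 M) (hanti (hmemT i hi)) hτpos.le
      have := Finset.card_nsmul_le_sum T _ _ hb
      rw [nsmul_eq_mul] at this
      refine le_trans ?_ this
      exact mul_le_mul_of_nonneg_right (by exact_mod_cast hTcard)
        (Real.rpow_nonneg (hlam0 M) _)
    have p₀ : Fin d × ℕ × Fin 2 := (⟨0, hd⟩, 0, ⟨0, by norm_num⟩)
    set ι : ℕ → Fin d × ℕ × Fin 2 := fun i => Sum.elim (fun _ => p₀) id (e i) with hιdef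
    have hι : ∀ i ∈ T, (lam d i) ^ τ = f (ι i) := by
      intro i hi
      obtain ⟨y, hy⟩ := Sum.isRight_iff.1 (Finset.mem_filter.1 hi).2
      rw [he i, hy, hιdef]
      simp [hfdef, hy]
    have hιinj : ∀ a ∈ T, ∀ b ∈ T, ι a = ι b → a = b := by
      intro a ha b hb hab
      obtain ⟨ya, hya⟩ := Sum.isRight_iff.1 (Finset.mem_filter.1 ha).2
      obtain ⟨yb, hyb⟩ := Sum.isRight_iff.1 (Finset.mem_filter.1 hb).2
      apply e.injective
      rw [hya, hyb]
      rw [hιdef] at hab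
      simp only [hya, hyb, Sum.elim_inr, id] at hab
      rw [hab]
    have hstep2 : ∑ i ∈ T, (lam d i) ^ τ = ∑ y ∈ T.image ι, f y := by
      rw [Finset.sum_image hιinj]
      exact Finset.sum_congr rfl hι
    have hstep3 : ∑ y ∈ T.image ι, f y ≤ ∑' y, f y :=
      Summable.sum_le_tsum _ (fun y _ => hf0 y) hfsum
    calc (M:ℝ) * (lam d M) ^ τ ≤ ∑ i ∈ T, (lam d i) ^ τ := hstep1
      _ = ∑ y ∈ T.image ι, f y := hstep2
      _ ≤ ∑' y, f y := hstep3
      _ ≤ K * d := hfle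
  have hKd0 : (0:ℝ) ≤ K * d := mul_nonneg hK0 (Nat.cast_nonneg d)
  have hpt : ∀ M : ℕ, 1 ≤ M → lam d M ≤ (K*(d:ℝ))^u * (M:ℝ)^(-u) := by
    intro M hM
    have hM0 : (0:ℝ) < M := by exact_mod_cast hM
    have h1 : (lam d M)^τ ≤ (K*d)/M := by
      rw [le_div_iff₀ hM0]
      linarith [key M hM]
    have h2 : ((lam d M)^τ)^u = lam d M := by
      rw [← Real.rpow_mul (hlam0 M), hτu, Real.rpow_one]
    rw [← h2]
    calc ((lam d M)^τ)^u ≤ ((K*d)/M)^u :=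
          Real.rpow_le_rpow (Real.rpow_nonneg (hlam0 M) τ) h1 (by linarith)
      _ = (K*(d:ℝ))^u * (M:ℝ)^(-u) := by
          rw [Real.div_rpow hKd0 hM0.le, Real.rpow_neg hM0.le, div_eq_mul_inv]
  have hLlb : 2 * β 1 ≤ ∑' m, lam d m := by
    set i₁ : ℕ := e.symm (Sum.inr (⟨0, hd⟩, 0, ⟨0, by norm_num⟩)) with hi₁
    set i₂ : ℕ := e.symm (Sum.inr (⟨0, hd⟩, 0, ⟨1, by norm_num⟩)) with hi₂
    have hne : i₁ ≠ i₂ := by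
      intro h
      have h2 := congrArg e h
      rw [hi₁, hi₂, Equiv.apply_symm_apply, Equiv.apply_symm_apply] at h2
      simp only [Sum.inr.injEq, Prod.mk.injEq, Fin.mk.injEq] at h2
      exact absurd h2.2.2 (by norm_num)
    have hv₁ : lam d i₁ = β 1 := by
      rw [he, hi₁, Equiv.apply_symm_apply]
      simp [korobovVal, Real.one_rpow]
    have hv₂ : lam d i₂ = β 1 := by
      rw [he, hi₂, Equiv.apply_symm_apply]
      simp [korobovVal, Real.one_rpow]
    have hst := Summable.sum_le_tsum ({i₁, i₂} : Finset ℕ) (fun i _ => hlam0 i) (hsum d hd)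
    rw [Finset.sum_pair hne, hv₁, hv₂] at hst
    linarith
  have hεsq : (0:ℝ) < ε^2 := by positivity
  set Y : ℝ := (K*(d:ℝ))^u * Z₁ / (2 * β 1 * ε^2) with hYdef
  have hY0 : 0 ≤ Y :=
    div_nonneg (mul_nonneg (Real.rpow_nonneg hKd0 _) hZ₁nonneg) (by positivity)
  set X : ℝ := Y ^ (1/δ) with hXdef
  have hX0 : 0 ≤ X := Real.rpow_nonneg hY0 _
  set N : ℕ := ⌈X⌉₊ + 1 with hNdef
  have hN1 : 1 ≤ N := by omega
  have hNX : X ≤ (N:ℝ) := by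
    rw [hNdef]
    push_cast
    linarith [Nat.le_ceil X]
  have hN0 : (0:ℝ) < N := by exact_mod_cast hN1
  have htail : ∑' m, lam d (N + m) ≤ (K*(d:ℝ))^u * Z₁ * (N:ℝ)^(-δ) := by
    have hb : ∀ m : ℕ, lam d (N+m) ≤ ((K*(d:ℝ))^u * (N:ℝ)^(-δ)) * ((m:ℝ)+1)^(-r₁) := by
      intro m
      have hNm0 : (0:ℝ) < ((N+m : ℕ):ℝ) := by
        push_cast
        linarith [Nat.cast_nonneg (α := ℝ) m]
      have h1 : lam d (N+m) ≤ (K*(d:ℝ))^u * ((N+m:ℕ):ℝ)^(-u) := hpt (N+m) (by omega)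
      have h2 : ((N+m:ℕ):ℝ)^(-u) = ((N+m:ℕ):ℝ)^(-δ) * ((N+m:ℕ):ℝ)^(-r₁) := by
        rw [← Real.rpow_add hNm0, ← huδ]
      have h3 : ((N+m:ℕ):ℝ)^(-δ) ≤ (N:ℝ)^(-δ) :=
        Real.rpow_le_rpow_of_nonpos hN0 (by push_cast; linarith [Nat.cast_nonneg (α := ℝ) m])
          (by linarith)
      have h4 : ((N+m:ℕ):ℝ)^(-r₁) ≤ ((m:ℝ)+1)^(-r₁) := by
        refine Real.rpow_le_rpow_of_nonpos (by positivity) ?_ (by linarith)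
        push_cast
        have : (1:ℝ) ≤ (N:ℝ) := by exact_mod_cast hN1
        linarith
      calc lam d (N+m) ≤ (K*(d:ℝ))^u * ((N+m:ℕ):ℝ)^(-u) := h1
        _ = (K*(d:ℝ))^u * (((N+m:ℕ):ℝ)^(-δ) * ((N+m:ℕ):ℝ)^(-r₁)) := by rw [h2]
        _ ≤ (K*(d:ℝ))^u * ((N:ℝ)^(-δ) * ((m:ℝ)+1)^(-r₁)) := by
            refine mul_le_mul_of_nonneg_left ?_ (Real.rpow_nonneg hKd0 _)
            exact mul_le_mul h3 h4 (Real.rpow_nonneg hNm0.le _) (Real.rpow_nonneg hN0.le _)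
        _ = ((K*(d:ℝ))^u * (N:ℝ)^(-δ)) * ((m:ℝ)+1)^(-r₁) := by ring
    have hsl : Summable (fun m => lam d (N+m)) := by
      have := (summable_nat_add_iff N).2 (hsum d hd)
      exact this.congr fun m => by rw [add_comm]
    have hsr : Summable (fun m : ℕ => ((K*(d:ℝ))^u * (N:ℝ)^(-δ)) * ((m:ℝ)+1)^(-r₁)) :=
      hZ₁sum.mul_left _
    calc ∑' m, lam d (N+m)
        ≤ ∑' m : ℕ, ((K*(d:ℝ))^u * (N:ℝ)^(-δ)) * ((m:ℝ)+1)^(-r₁) := Summable.tsum_le_tsum hb hsl hsr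
      _ = ((K*(d:ℝ))^u * (N:ℝ)^(-δ)) * Z₁ := by rw [tsum_mul_left, hZ₁def]
      _ = (K*(d:ℝ))^u * Z₁ * (N:ℝ)^(-δ) := by ring
  have hNδ0 : (0:ℝ) < (N:ℝ)^δ := Real.rpow_pos_of_pos hN0 _
  have hYN : Y ≤ (N:ℝ)^δ := by
    calc Y = (Y^(1/δ))^δ := by
          rw [← Real.rpow_mul hY0, one_div_mul_cancel hδpos.ne', Real.rpow_one]
      _ ≤ (N:ℝ)^δ := Real.rpow_le_rpow hX0 hNX hδpos.le
  have h2 : (K*(d:ℝ))^u * Z₁ * (N:ℝ)^(-δ) ≤ 2 * β 1 * ε^2 := by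
    have hW : (K*(d:ℝ))^u * Z₁ ≤ (N:ℝ)^δ * (2*β 1*ε^2) := by
      rw [hYdef, div_le_iff₀ (by positivity)] at hYN
      linarith
    rw [Real.rpow_neg hN0.le, ← div_eq_mul_inv, div_le_iff₀ hNδ0]
    exact hW.trans_eq (mul_comm _ _)
  have h3 : 2 * β 1 * ε^2 ≤ ε^2 * ∑' m, lam d m := by
    have := mul_le_mul_of_nonneg_left hLlb hεsq.le
    linarith
  have hmem : N ∈ {n : ℕ | ∑' m, lam d (n + m) ≤ ε^2 * ∑' m, lam d m} :=
    le_trans htail (le_trans h2 h3)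
  have hfinal : nNOR (lam d) ε ≤ N := Nat.sInf_le hmem
  have hKd : (K*(d:ℝ))^u = K^u * (d:ℝ)^u := Real.mul_rpow hK0 (Nat.cast_nonneg d)
  have hε2 : ε ^ (-(2:ℝ)) = (ε^2)⁻¹ := by
    rw [Real.rpow_neg hε0.le, show ((2:ℝ)) = ((2:ℕ):ℝ) by norm_num, Real.rpow_natCast]
  have hYeq : Y = (K^u * Z₁/(2*β 1)) * ((d:ℝ)^u * ε^(-(2:ℝ))) := by
    rw [hYdef, hKd, hε2]
    field_simp
  have hm1 : 0 ≤ K^u * Z₁/(2*β 1) :=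
    div_nonneg (mul_nonneg (Real.rpow_nonneg hK0 _) hZ₁nonneg) (by linarith)
  have hm2 : 0 ≤ (d:ℝ)^u := Real.rpow_nonneg (Nat.cast_nonneg d) _
  have hm3 : 0 ≤ ε^(-(2:ℝ)) := Real.rpow_nonneg hε0.le _
  have hXeq : X = A * (d:ℝ)^(u/δ) * ε^(-(2/δ)) := by
    rw [hXdef, hYeq, Real.mul_rpow hm1 (mul_nonneg hm2 hm3), Real.mul_rpow hm2 hm3,
      ← Real.rpow_mul (Nat.cast_nonneg d), ← Real.rpow_mul hε0.le,
      show u * (1/δ) = u/δ by ring, show (-(2:ℝ)) * (1/δ) = -(2/δ) by ring, ← hAdef]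
    ring
  have hdq : 1 ≤ (d:ℝ)^(u/δ) :=
    Real.one_le_rpow (by exact_mod_cast hd) (le_of_lt (by positivity))
  have hεp1 : 1 ≤ ε^(-(2/δ)) :=
    Real.one_le_rpow_of_pos_of_le_one_of_nonpos hε0 hε1.le
      (neg_nonpos.2 (le_of_lt (by positivity)))
  have hDE : 1 ≤ (d:ℝ)^(u/δ) * ε^(-(2/δ)) :=
    hdq.trans (le_mul_of_one_le_right (by linarith) hεp1)
  calc (nNOR (lam d) ε : ℝ) ≤ (N:ℝ) := by exact_mod_cast hfinal
    _ ≤ X + 2 := by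
        rw [hNdef]
        push_cast
        linarith [Nat.ceil_lt_add_one hX0]
    _ = A * (d:ℝ)^(u/δ) * ε^(-(2/δ)) + 2 := by rw [hXeq]
    _ ≤ (A+2) * (d:ℝ)^(u/δ) * ε^(-(2/δ)) := by linarith [hDE]
end

section
/- Assume additionally that α_j = 1 for all j ∈ ℕ. Then the approximation problem for additive random fields with Korobov kernels is strongly polynomially tractable under the normalized error criterion (i.e., there exist C ≥ 0 and p ≥ 0 such that n^{NOR}(ε,d) ≤ C · ε^{−p} for all d ∈ ℕ and ε ∈ (0,1)) if and only if liminf_{d→∞} (ln(1/β_d))/(ln d) > 0. -/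
open Filter Set

/-- `A_* = liminf_{d→∞} ln(1/β_d) / ln d`, as an extended real (it may be `+∞`). -/
noncomputable def Astar (β : ℕ → ℝ) : EReal :=
  Filter.atTop.liminf fun d : ℕ => ((Real.log (1 / β d) / Real.log d : ℝ) : EReal)

section Helpers

lemma hasSum_unitSum {X : Type*} {g : Unit ⊕ X → ℝ} {b : ℝ}
    (h : HasSum (fun x : X => g (Sum.inr x)) b) : HasSum g (g (Sum.inl ()) + b) := by
  have h1 : HasSum (g ∘ (Subtype.val : (Set.range (Sum.inl : Unit → Unit ⊕ X)) → _))
      (g (Sum.inl ())) := by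
    rw [← (Equiv.ofInjective (Sum.inl : Unit → Unit ⊕ X) Sum.inl_injective).hasSum_iff]
    have heq : (g ∘ Subtype.val) ∘
        (Equiv.ofInjective (Sum.inl : Unit → Unit ⊕ X) Sum.inl_injective)
        = fun u : Unit => g (Sum.inl u) := by funext u; simp
    rw [heq]
    simpa using hasSum_fintype (fun u : Unit => g (Sum.inl u))
  have h2 : HasSum (g ∘ (Subtype.val : (Set.range (Sum.inr : X → Unit ⊕ X)) → _)) b := by
    rw [← (Equiv.ofInjective (Sum.inr : X → Unit ⊕ X) Sum.inr_injective).hasSum_iff]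
    have heq : (g ∘ Subtype.val) ∘
        (Equiv.ofInjective (Sum.inr : X → Unit ⊕ X) Sum.inr_injective)
        = fun x : X => g (Sum.inr x) := by funext x; simp
    rw [heq]; exact h
  exact h1.add_isCompl Set.isCompl_range_inl_range_inr h2

lemma summable_W {s : ℝ} (hs : 1 < s) : Summable (fun k : ℕ => 1 / ((k : ℝ) + 1) ^ s) := by
  have h0 := Real.summable_one_div_nat_rpow.mpr hs
  have := (summable_nat_add_iff (f := fun n : ℕ => 1 / (n : ℝ) ^ s) 1).mpr h0
  refine this.congr fun k => ?_
  push_cast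
  ring_nf

lemma tsum_fin2_const (x : ℝ) : ∑' _ : Fin 2, x = 2 * x := by
  rw [tsum_fintype]
  simp [Finset.sum_const]

lemma hasSum_prod_aux {d : ℕ} {c : Fin d → ℝ} (hc : ∀ j, 0 ≤ c j)
    {w : ℕ → ℝ} (hw : ∀ k, 0 ≤ w k) (hws : Summable w) :
    HasSum (fun p : Fin d × ℕ × Fin 2 => c p.1 * w p.2.1)
      ((∑ j, c j) * (2 * ∑' k, w k)) := by
  have hq : Summable (fun q : ℕ × Fin 2 => w q.1) := by
    refine (summable_prod_of_nonneg (f := fun q : ℕ × Fin 2 => w q.1)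
      (fun q => hw q.1)).mpr ⟨fun k => Summable.of_finite, ?_⟩
    have heq : (fun k : ℕ => ∑' _ : Fin 2, w k) = fun k => 2 * w k := by
      funext k; exact tsum_fin2_const (w k)
    exact heq ▸ hws.mul_left 2
  have hqsum : ∑' q : ℕ × Fin 2, w q.1 = 2 * ∑' k, w k := by
    rw [Summable.tsum_prod' hq (fun k => Summable.of_finite)]
    have heq : (fun k : ℕ => ∑' _ : Fin 2, w k) = fun k => 2 * w k := by
      funext k; exact tsum_fin2_const (w k)
    calc ∑' (k : ℕ), ∑' (_ : Fin 2), w k = ∑' k : ℕ, 2 * w k := by rw [heq]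
    _ = 2 * ∑' k, w k := tsum_mul_left
  have hsumm : Summable (fun p : Fin d × ℕ × Fin 2 => c p.1 * w p.2.1) := by
    refine (summable_prod_of_nonneg (f := fun p : Fin d × ℕ × Fin 2 => c p.1 * w p.2.1)
      (fun p => mul_nonneg (hc p.1) (hw p.2.1))).mpr ⟨fun j => hq.mul_left (c j), ?_⟩
    exact Summable.of_finite
  have hval : ∑' p : Fin d × ℕ × Fin 2, c p.1 * w p.2.1 = (∑ j, c j) * (2 * ∑' k, w k) := by
    rw [Summable.tsum_prod' hsumm (fun j => hq.mul_left (c j)), tsum_fintype, Finset.sum_mul]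
    refine Finset.sum_congr rfl fun j _ => ?_
    show ∑' (q : ℕ × Fin 2), c j * w q.1 = c j * (2 * ∑' k, w k)
    rw [tsum_mul_left, hqsum]
  exact hval ▸ hsumm.hasSum

/-- Workhorse: comparison of a nonneg function on `Unit ⊕ (Fin d × ℕ × Fin 2)`
with a product-type majorant. -/
lemma tsum_unitSum_bound {d : ℕ} {X : ℝ} {c : Fin d → ℝ} (hc : ∀ j, 0 ≤ c j)
    {w : ℕ → ℝ} (hw : ∀ k, 0 ≤ w k) (hws : Summable w)
    {F : Unit ⊕ (Fin d × ℕ × Fin 2) → ℝ} (hF0 : ∀ i, 0 ≤ F i)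
    (hle1 : F (Sum.inl ()) ≤ X)
    (hle2 : ∀ p : Fin d × ℕ × Fin 2, F (Sum.inr p) ≤ c p.1 * w p.2.1) :
    Summable F ∧ ∑' i, F i ≤ X + (∑ j, c j) * (2 * ∑' k, w k) := by
  set g : Unit ⊕ (Fin d × ℕ × Fin 2) → ℝ :=
    Sum.elim (fun _ => X) (fun p => c p.1 * w p.2.1) with hg
  have hgsum : HasSum g (X + (∑ j, c j) * (2 * ∑' k, w k)) := by
    have := hasSum_unitSum (g := g) (hasSum_prod_aux hc hw hws)
    simpa [hg] using this
  have hle : ∀ i, F i ≤ g i := by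
    rintro (⟨⟩ | p)
    · exact hle1
    · exact hle2 p
  have hFs : Summable F := Summable.of_nonneg_of_le hF0 hle hgsum.summable
  exact ⟨hFs, (Summable.tsum_le_tsum hle hFs hgsum.summable).trans_eq hgsum.tsum_eq⟩

lemma chain_mono {f : ℕ → ℝ} (h : ∀ j, 1 ≤ j → f (j + 1) ≤ f j) {j d : ℕ}
    (hj : 1 ≤ j) (hjd : j ≤ d) : f d ≤ f j := by
  induction d, hjd using Nat.le_induction with
  | base => exact le_refl _
  | succ n hn ih => exact (h n (le_trans hj hn)).trans ih

lemma antitone_nonneg {f : ℕ → ℝ} (hf : Antitone f) (hs : Summable f) (m : ℕ) : 0 ≤ f m :=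
  le_of_tendsto hs.tendsto_atTop_zero (eventually_atTop.2 ⟨m, fun k hk => hf hk⟩)

lemma sum_rpow_neg_le {a : ℝ} (ha0 : 0 < a) (ha1 : a < 1) (d : ℕ) :
    ∑ j ∈ Finset.Icc 1 d, ((j : ℝ)) ^ (-a) ≤ (d : ℝ) ^ (1 - a) / (1 - a) := by
  have h1a : (0:ℝ) < 1 - a := by linarith
  induction d with
  | zero =>
    simp [Real.zero_rpow (by linarith : (1:ℝ) - a ≠ 0)]
  | succ n ih =>
    rw [Finset.sum_Icc_succ_top (by omega : 1 ≤ n + 1)]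
    set x : ℝ := (n : ℝ) + 1 with hx
    have hxpos : (0:ℝ) < x := by positivity
    have hx1 : (1:ℝ) ≤ x := by simp [hx]
    have hx1' : (0:ℝ) ≤ x - 1 := by linarith
    have hkey : (n : ℝ) ^ (1 - a) + (1 - a) * x ^ (-a) ≤ x ^ (1 - a) := by
      have hbern := rpow_one_add_le_one_add_mul_self
        (s := -(1/x)) (by rw [neg_le, neg_neg]; exact (div_le_one hxpos).mpr hx1)
        (p := 1 - a) h1a.le (by linarith)
      have hs : (1 : ℝ) + -(1/x) = (x - 1)/x := by field_simp; ring
      rw [hs] at hbern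
      have hxr : (0:ℝ) < x ^ (1 - a) := Real.rpow_pos_of_pos hxpos _
      have hmul := mul_le_mul_of_nonneg_right hbern hxr.le
      have hL : ((x - 1)/x) ^ (1 - a) * x ^ (1 - a) = (x - 1) ^ (1 - a) := by
        rw [← Real.mul_rpow (div_nonneg hx1' hxpos.le) hxpos.le,
          div_mul_cancel₀ _ hxpos.ne']
      have hR : (1 + (1 - a) * -(1/x)) * x ^ (1 - a)
          = x ^ (1 - a) - (1 - a) * x ^ (-a) := by
        have hxe : x ^ (1 - a) = x ^ (-a) * x := by
          rw [show (1 : ℝ) - a = -a + 1 by ring, Real.rpow_add hxpos, Real.rpow_one]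
        rw [hxe]; field_simp; ring
      rw [hL, hR] at hmul
      have hxn : x - 1 = (n : ℝ) := by simp [hx]
      rw [hxn] at hmul
      linarith
    have hxa : (0:ℝ) < x ^ (-a) := Real.rpow_pos_of_pos hxpos _
    have hcst : ((n + 1 : ℕ) : ℝ) = x := by push_cast [hx]; ring
    rw [hcst]
    have h2 : x ^ (-a) ≤ (x ^ (1 - a) - (n:ℝ) ^ (1 - a))/(1 - a) := by
      rw [le_div_iff₀ h1a]; nlinarith
    calc ∑ k ∈ Finset.Icc 1 n, (k:ℝ) ^ (-a) + x ^ (-a)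
        ≤ (n:ℝ) ^ (1 - a)/(1 - a) + (x ^ (1 - a) - (n:ℝ) ^ (1 - a))/(1 - a) :=
          add_le_add ih h2
      _ = x ^ (1 - a)/(1 - a) := by ring

lemma tau_tail_bound {lam : ℕ → ℝ} {τ : ℝ} (hτ0 : 0 < τ) (hτ1 : τ < 1)
    (hanti : Antitone lam) (hnn : ∀ m, 0 ≤ lam m) (hsum : Summable lam)
    (hM : Summable (fun m => lam m ^ τ)) (n : ℕ) :
    ∑' m, lam (n + m) ≤
      (∑' m, lam m ^ τ) ^ (1/τ) * (((n : ℝ) + 1)) ^ (-((1 - τ)/τ)) := by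
  set M := ∑' m, lam m ^ τ with hMdef
  have hrnn : ∀ m, (0:ℝ) ≤ lam m ^ τ := fun m => Real.rpow_nonneg (hnn m) τ
  have hM0 : 0 ≤ M := tsum_nonneg hrnn
  have hshiftlam : Summable (fun m => lam (n + m)) :=
    ((summable_nat_add_iff n).mpr hsum).congr (fun m => by rw [add_comm])
  have hshift : Summable (fun m => lam (n + m) ^ τ) :=
    ((summable_nat_add_iff (f := fun m => lam m ^ τ) n).mpr hM).congr
      (fun m => by rw [add_comm])
  rcases eq_or_lt_of_le hM0 with hM0' | hMpos
  · have hz : ∀ m, lam m = 0 := by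
      intro m
      have hle := Summable.le_tsum hM m (fun j _ => hrnn j)
      rw [← hMdef, ← hM0'] at hle
      have : lam m ^ τ = 0 := le_antisymm hle (hrnn m)
      rwa [Real.rpow_eq_zero (hnn m) hτ0.ne'] at this
    have hz2 : ∑' m, lam (n + m) = 0 := by
      rw [tsum_congr (fun m => hz (n + m)), tsum_zero]
    rw [hz2, ← hM0', Real.zero_rpow (by positivity : 1/τ ≠ 0), zero_mul]
  · have hnpos : (0:ℝ) < (n : ℝ) + 1 := by positivity
    have h1 : ∀ m : ℕ, lam m ^ τ ≤ M / ((m:ℝ) + 1) := by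
      intro m
      have hmpos : (0:ℝ) < (m : ℝ) + 1 := by positivity
      rw [le_div_iff₀ hmpos]
      have hcard : lam m ^ τ * ((m:ℝ) + 1) = ∑ _i ∈ Finset.range (m+1), lam m ^ τ := by
        rw [Finset.sum_const, Finset.card_range]; push_cast; ring
      rw [hcard]
      refine le_trans (Finset.sum_le_sum fun i hi => ?_)
        (Summable.sum_le_tsum _ (fun i _ => hrnn i) hM)
      exact Real.rpow_le_rpow (hnn m)
        (hanti (Nat.lt_succ_iff.mp (Finset.mem_range.mp hi))) hτ0.le
    have h2 : ∀ m : ℕ, lam m ≤ (M / ((m:ℝ) + 1)) ^ (1/τ) := by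
      intro m
      have h := Real.rpow_le_rpow (hrnn m) (h1 m) (by positivity : (0:ℝ) ≤ 1/τ)
      rwa [← Real.rpow_mul (hnn m), mul_one_div, div_self hτ0.ne', Real.rpow_one] at h
    have h3 : ∑' m, lam (n + m) ≤ lam n ^ (1 - τ) * M := by
      have hterm : ∀ m, lam (n + m) ≤ lam n ^ (1 - τ) * lam (n + m) ^ τ := by
        intro m
        have hsplit : lam (n + m) = lam (n + m) ^ (1 - τ) * lam (n + m) ^ τ := by
          rw [← Real.rpow_add' (hnn _) (by norm_num : (1:ℝ) - τ + τ ≠ 0)]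
          norm_num
        nth_rewrite 1 [hsplit]
        exact mul_le_mul_of_nonneg_right
          (Real.rpow_le_rpow (hnn _) (hanti (Nat.le_add_right n m)) (by linarith))
          (hrnn _)
      calc ∑' m, lam (n + m) ≤ ∑' m, lam n ^ (1 - τ) * lam (n + m) ^ τ :=
            Summable.tsum_le_tsum hterm hshiftlam (hshift.mul_left _)
        _ = lam n ^ (1 - τ) * ∑' m, lam (n + m) ^ τ := tsum_mul_left
        _ ≤ lam n ^ (1 - τ) * M := by
            refine mul_le_mul_of_nonneg_left ?_ (Real.rpow_nonneg (hnn n) _)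
            exact Summable.tsum_le_tsum_of_inj (fun m => n + m) (add_right_injective n)
              (fun c _ => hrnn c) (fun m => le_refl _) hshift hM
    have h4 : lam n ^ (1 - τ) ≤ (M / ((n:ℝ) + 1)) ^ ((1 - τ)/τ) := by
      have h := Real.rpow_le_rpow (hnn n) (h2 n) (by linarith : (0:ℝ) ≤ 1 - τ)
      rwa [← Real.rpow_mul (div_nonneg hM0 hnpos.le), one_div, inv_mul_eq_div] at h
    calc ∑' m, lam (n + m) ≤ lam n ^ (1 - τ) * M := h3
      _ ≤ (M / ((n:ℝ) + 1)) ^ ((1 - τ)/τ) * M := mul_le_mul_of_nonneg_right h4 hM0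
      _ = M ^ (1/τ) * (((n : ℝ) + 1)) ^ (-((1 - τ)/τ)) := by
          have hsx : (1 - τ)/τ + 1 = 1/τ := by field_simp; ring
          rw [Real.div_rpow hM0 hnpos.le, Real.rpow_neg hnpos.le, ← hsx,
            Real.rpow_add hMpos, Real.rpow_one]
          ring

section KorobovFacts
variable {α β σ : ℕ → ℝ}

lemma korobov_inl (hα1 : ∀ j : ℕ, 1 ≤ j → α j = 1) (d : ℕ) :
    korobovVal α β σ d (Sum.inl ()) = d := by
  show ∑ j ∈ Finset.Icc 1 d, α j = d
  rw [Finset.sum_congr rfl (fun j hj => hα1 j (Finset.mem_Icc.mp hj).1),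
    Finset.sum_const, Nat.card_Icc]
  simp

lemma korobov_nonneg (hα : ∀ j : ℕ, 1 ≤ j → 0 ≤ α j)
    (hβpos : ∀ j : ℕ, 1 ≤ j → 0 < β j) (d : ℕ) :
    ∀ i, 0 ≤ korobovVal α β σ d i := by
  rintro (⟨⟩ | ⟨j, k, i⟩)
  · exact Finset.sum_nonneg fun j hj => hα j (Finset.mem_Icc.mp hj).1
  · exact div_nonneg (hβpos _ (by omega)).le (Real.rpow_nonneg (by positivity) _)

lemma sigma_le (hσmono : ∀ j : ℕ, 1 ≤ j → σ j ≤ σ (j + 1)) {m : ℕ} (hm : 1 ≤ m) :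
    σ 1 ≤ σ m := by
  have := chain_mono (f := fun j => -σ j)
    (fun j hj => neg_le_neg (hσmono j hj)) (le_refl 1) hm
  simpa using this

/-- `korobovVal` at `inr (j,k,i)`, raised to power `t > 0`, is at most
`β(j+1)^t · (k+1)^{-t·σ₁}`. -/
lemma korobov_inr_rpow_le (hβpos : ∀ j : ℕ, 1 ≤ j → 0 < β j)
    (hσmono : ∀ j : ℕ, 1 ≤ j → σ j ≤ σ (j + 1)) {t : ℝ} (ht0 : 0 < t)
    {d : ℕ} (p : Fin d × ℕ × Fin 2) :
    korobovVal α β σ d (Sum.inr p) ^ t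
      ≤ β ((p.1 : ℕ) + 1) ^ t * (1 / ((p.2.1 : ℝ) + 1) ^ (t * σ 1)) := by
  obtain ⟨j, k, i⟩ := p
  have hk1 : (1:ℝ) ≤ (k : ℝ) + 1 := by have := Nat.cast_nonneg (α := ℝ) k; linarith
  have hk0 : (0:ℝ) ≤ (k : ℝ) + 1 := by positivity
  have hβj : 0 < β ((j : ℕ) + 1) := hβpos _ (by omega)
  show (β ((j : ℕ) + 1) / ((k : ℝ) + 1) ^ σ ((j : ℕ) + 1)) ^ t ≤ _
  have hσj : σ 1 ≤ σ ((j : ℕ) + 1) := sigma_le hσmono (by omega)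
  rw [Real.div_rpow hβj.le (Real.rpow_nonneg hk0 _), ← Real.rpow_mul hk0]
  rw [div_eq_mul_one_div]
  refine mul_le_mul_of_nonneg_left ?_ (Real.rpow_nonneg hβj.le t)
  refine one_div_le_one_div_of_le
    (Real.rpow_pos_of_pos (show (0:ℝ) < (k:ℝ)+1 by positivity) _) ?_
  refine Real.rpow_le_rpow_of_exponent_le hk1 ?_
  nlinarith

lemma lam_ge_beta (hβ1 : β 1 ≤ 1)
    (hβmono : ∀ j : ℕ, 1 ≤ j → β (j + 1) ≤ β j)
    (hα1 : ∀ j : ℕ, 1 ≤ j → α j = 1)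
    {lam : ℕ → ℝ} {d : ℕ} (hd : 1 ≤ d) (hanti : Antitone lam)
    (e : ℕ ≃ (Unit ⊕ (Fin d × ℕ × Fin 2)))
    (he : ∀ m, lam m = korobovVal α β σ d (e m)) :
    ∀ m ≤ 2 * d, β d ≤ lam m := by
  have hval : ∀ i, β d ≤ korobovVal α β σ d i ∨
      (∃ p : Fin d × ℕ × Fin 2, i = Sum.inr p ∧ 0 < p.2.1) := by
    rintro (⟨⟩ | ⟨j, k, i⟩)
    · left
      rw [korobov_inl hα1 d]
      have h1 : (1:ℝ) ≤ d := by exact_mod_cast hd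
      have h2 : β d ≤ β 1 := chain_mono hβmono (le_refl 1) hd
      linarith
    · rcases Nat.eq_zero_or_pos k with hk | hk
      · left
        subst hk
        show β d ≤ β ((j : ℕ) + 1) / (((0:ℕ) : ℝ) + 1) ^ σ ((j : ℕ) + 1)
        have h1 : (((0:ℕ) : ℝ) + 1) ^ σ ((j : ℕ) + 1) = 1 := by
          norm_num
        rw [h1, div_one]
        exact chain_mono hβmono (by omega) (by omega : (j : ℕ) + 1 ≤ d)
      · right; exact ⟨(j, k, i), rfl, hk⟩
  classical
  set T : Finset (Unit ⊕ (Fin d × ℕ × Fin 2)) :=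
    insert (Sum.inl ())
      ((Finset.univ : Finset (Fin d × Fin 2)).image fun p => Sum.inr (p.1, 0, p.2)) with hT
  have hTval : ∀ i ∈ T, β d ≤ korobovVal α β σ d i := by
    intro i hi
    rw [hT, Finset.mem_insert] at hi
    rcases hi with rfl | hi
    · rcases hval (Sum.inl ()) with h | ⟨p, hp, _⟩
      · exact h
      · exact absurd hp (by simp)
    · obtain ⟨p, _, rfl⟩ := Finset.mem_image.mp hi
      rcases hval (Sum.inr (p.1, 0, p.2)) with h | ⟨q, hq, hq2⟩
      · exact h
      · rw [Sum.inr.injEq] at hq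
        subst hq
        simp at hq2
  have hinj : Function.Injective fun p : Fin d × Fin 2 => (Sum.inr (p.1, 0, p.2) :
      Unit ⊕ (Fin d × ℕ × Fin 2)) := by
    intro p q h
    simp only [Sum.inr.injEq, Prod.mk.injEq] at h
    exact Prod.ext h.1 h.2.2
  have hTcard : T.card = 2 * d + 1 := by
    rw [hT, Finset.card_insert_of_notMem (by simp)]
    rw [Finset.card_image_of_injective _ hinj, Finset.card_univ]
    simp [Fintype.card_prod]
    ring
  set S : Finset ℕ := T.image (fun i => e.symm i) with hS
  have hScard : S.card = 2 * d + 1 := by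
    rw [hS, Finset.card_image_of_injective _ e.symm.injective, hTcard]
  have hSval : ∀ x ∈ S, β d ≤ lam x := by
    intro x hx
    obtain ⟨i, hi, rfl⟩ := Finset.mem_image.mp hx
    rw [he, Equiv.apply_symm_apply]
    exact hTval i hi
  have hbig : ∃ x ∈ S, 2 * d ≤ x := by
    by_contra h
    push_neg at h
    have hsub : S ⊆ Finset.range (2 * d) := fun x hx => Finset.mem_range.mpr (h x hx)
    have := Finset.card_le_card hsub
    rw [hScard, Finset.card_range] at this
    omega
  obtain ⟨x, hxS, hx⟩ := hbig
  intro m hm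
  exact le_trans (hSval x hxS) (hanti (le_trans hm hx))

end KorobovFacts

lemma tail_lower {lam : ℕ → ℝ} (hsum : Summable lam) (hnn : ∀ m, 0 ≤ lam m)
    {d n : ℕ} {b : ℝ} (hbd : ∀ m ≤ 2 * d, b ≤ lam m) (hn : n ≤ 2 * d) :
    ((2 * d + 1 - n : ℕ) : ℝ) * b ≤ ∑' m, lam (n + m) := by
  have hs : Summable fun m => lam (n + m) :=
    ((summable_nat_add_iff n).mpr hsum).congr (fun m => by rw [add_comm])
  calc ((2 * d + 1 - n : ℕ) : ℝ) * b = ∑ _i ∈ Finset.range (2 * d + 1 - n), b := by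
        rw [Finset.sum_const, Finset.card_range, nsmul_eq_mul]
    _ ≤ ∑ i ∈ Finset.range (2 * d + 1 - n), lam (n + i) := by
        refine Finset.sum_le_sum fun i hi => ?_
        exact hbd (n + i) (by have := Finset.mem_range.mp hi; omega)
    _ ≤ ∑' m, lam (n + m) := Summable.sum_le_tsum _ (fun i _ => hnn _) hs

lemma tail_tendsto {lam : ℕ → ℝ} (hsum : Summable lam) :
    Tendsto (fun n => ∑' m, lam (n + m)) atTop (nhds 0) := by
  have heq : (fun n => ∑' m, lam (n + m))
      = fun n => (∑' m, lam m) - ∑ i ∈ Finset.range n, lam i := by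
    funext n
    have h := Summable.sum_add_tsum_nat_add n hsum
    have h2 : ∑' m, lam (n + m) = ∑' i, lam (i + n) :=
      tsum_congr fun m => by rw [add_comm]
    rw [h2]
    linarith
  rw [heq]
  have := tendsto_const_nhds (x := ∑' m, lam m) (f := atTop (α := ℕ))
  simpa using this.sub hsum.hasSum.tendsto_sum_nat

end Helpers

set_option maxHeartbeats 1000000

/-- (Theorem 2.3, particular case.) Assume `α_j = 1` for all
`j ≥ 1`. Then the problem is strongly polynomially tractable for NOR iff
`liminf_{d→∞} ln(1/β_d)/ln d > 0`. -/
theorem korobov_SPT_NOR_iff_of_alpha_one (α β σ : ℕ → ℝ) (lam : ℕ → ℕ → ℝ)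
    (hα : ∀ j : ℕ, 1 ≤ j → 0 ≤ α j)
    (hβ1 : β 1 ≤ 1)
    (hβpos : ∀ j : ℕ, 1 ≤ j → 0 < β j)
    (hβmono : ∀ j : ℕ, 1 ≤ j → β (j + 1) ≤ β j)
    (hσ1 : 1 < σ 1)
    (hσmono : ∀ j : ℕ, 1 ≤ j → σ j ≤ σ (j + 1))
    (hrearr : ∀ d : ℕ, 1 ≤ d → Antitone (lam d) ∧
      ∃ e : ℕ ≃ (Unit ⊕ (Fin d × ℕ × Fin 2)),
        ∀ m : ℕ, lam d m = korobovVal α β σ d (e m))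
    (hsum : ∀ d : ℕ, 1 ≤ d → Summable (lam d))
    (hα1 : ∀ j : ℕ, 1 ≤ j → α j = 1) :
    (∃ C p : ℝ, 0 ≤ C ∧ 0 ≤ p ∧
        ∀ d : ℕ, 1 ≤ d → ∀ ε : ℝ, ε ∈ Set.Ioo (0 : ℝ) 1 →
          (nNOR (lam d) ε : ℝ) ≤ C * ε ^ (-p)) ↔ 0 < Astar β := by
  -- Common facts, for every `d ≥ 1`.
  have hVfacts : ∀ d : ℕ, 1 ≤ d →
      (∀ m, 0 ≤ lam d m) ∧ (d : ℝ) ≤ ∑' m, lam d m := by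
    intro d hd
    obtain ⟨hanti, e, he⟩ := hrearr d hd
    have hnn := antitone_nonneg hanti (hsum d hd)
    refine ⟨hnn, ?_⟩
    have hVs : Summable (korobovVal α β σ d) :=
      e.summable_iff.mp ((hsum d hd).congr he)
    have hΛeq : ∑' m, lam d m = ∑' i, korobovVal α β σ d i := by
      rw [tsum_congr he]
      exact e.tsum_eq (korobovVal α β σ d)
    rw [hΛeq]
    have := Summable.le_tsum hVs (Sum.inl ()) (fun j _ => korobov_nonneg hα hβpos d j)
    rwa [korobov_inl hα1 d] at this
  constructor
  · -- SPT → liminf > 0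
    rintro ⟨C, p, hC, hp, hSPT⟩
    by_contra hA
    rw [not_lt] at hA
    set δ : ℝ := 1/(p+1) with hδdef
    have hp1 : (0:ℝ) < p + 1 := by linarith
    have hδpos : 0 < δ := by rw [hδdef]; positivity
    set Z1 : ℝ := ∑' k : ℕ, 1 / ((k:ℝ)+1) ^ (σ 1) with hZ1def
    have hZ1s := summable_W hσ1
    have hZ1nn : 0 ≤ Z1 := tsum_nonneg (fun k => by positivity)
    set c0 : ℝ := 1 + 2 * Z1 with hc0def
    have hc01 : 1 ≤ c0 := by rw [hc0def]; linarith
    -- upper bound on the traces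
    have hΛup : ∀ d : ℕ, 1 ≤ d → ∑' m, lam d m ≤ c0 * d := by
      intro d hd
      obtain ⟨hanti, e, he⟩ := hrearr d hd
      have hinlval : korobovVal α β σ d (Sum.inl ()) = (d:ℝ) := korobov_inl hα1 d
      have hle2 : ∀ q : Fin d × ℕ × Fin 2,
          korobovVal α β σ d (Sum.inr q) ≤ β ((q.1:ℕ)+1) * (1 / ((q.2.1:ℝ)+1) ^ (σ 1)) := by
        intro q
        have h := korobov_inr_rpow_le (α := α) hβpos hσmono (t := 1) one_pos q
        rwa [Real.rpow_one, Real.rpow_one, one_mul] at h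
      have hwb := tsum_unitSum_bound (d := d) (X := (d:ℝ))
        (c := fun j : Fin d => β ((j:ℕ)+1))
        (w := fun k : ℕ => 1 / ((k:ℝ) + 1) ^ (σ 1))
        (fun j => (hβpos _ (by omega)).le)
        (fun k => by positivity) hZ1s
        (F := korobovVal α β σ d)
        (korobov_nonneg hα hβpos d)
        (le_of_eq hinlval) hle2
      obtain ⟨hVs, hVle⟩ := hwb
      have heq : ∑' m, lam d m = ∑' i, korobovVal α β σ d i := by
        rw [tsum_congr he]
        exact e.tsum_eq (korobovVal α β σ d)
      rw [heq]
      refine le_trans hVle ?_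
      have hsb : ∑ j : Fin d, β ((j:ℕ)+1) ≤ (d:ℝ) := by
        calc ∑ j : Fin d, β ((j:ℕ)+1) ≤ ∑ _j : Fin d, (1:ℝ) := by
              refine Finset.sum_le_sum fun j _ => ?_
              exact le_trans (chain_mono hβmono (le_refl 1) (by omega)) hβ1
          _ = (d:ℝ) := by simp
      calc (d:ℝ) + (∑ j : Fin d, β ((j:ℕ)+1)) * (2 * Z1)
          ≤ (d:ℝ) + (d:ℝ) * (2 * Z1) := by
            refine add_le_add_right (mul_le_mul_of_nonneg_right hsb (by linarith)) _
        _ = c0 * d := by rw [hc0def]; ring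
    set K : ℝ := C * (2*c0) ^ (p/2) with hKdef
    have hK0 : 0 ≤ K := mul_nonneg hC (Real.rpow_nonneg (by linarith) _)
    set N : ℕ := max 2 (⌈K^2⌉₊ + 1) with hNdef
    have hlt : Astar β < ((δ:ℝ) : EReal) :=
      lt_of_le_of_lt hA (EReal.coe_pos.mpr hδpos)
    have hfreq := Filter.frequently_lt_of_liminf_lt
      (u := fun d : ℕ => ((Real.log (1 / β d) / Real.log d : ℝ) : EReal))
      (hu := by isBoundedDefault) hlt
    obtain ⟨d, hdN, hxd⟩ := frequently_atTop.mp hfreq N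
    rw [EReal.coe_lt_coe_iff] at hxd
    have hd2 : 2 ≤ d := le_trans (le_max_left _ _) hdN
    have hd1 : 1 ≤ d := by omega
    have hdR1 : (1:ℝ) < d := by exact_mod_cast (by omega : 1 < d)
    have hdpos : (0:ℝ) < d := by linarith
    have hβdpos : 0 < β d := hβpos d hd1
    -- 1/β d < d ^ δ
    have h2 : 1/β d < (d:ℝ) ^ δ := by
      have hlogd : 0 < Real.log d := Real.log_pos hdR1
      have h1 : Real.log (1/β d) < δ * Real.log d := by
        have := (div_lt_iff₀ hlogd).mp hxd
        linarith
      have hexp := Real.exp_lt_exp.mpr h1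
      rw [Real.exp_log (one_div_pos.mpr hβdpos)] at hexp
      rw [Real.rpow_def_of_pos hdpos, mul_comm]
      exact hexp
    set ε : ℝ := Real.sqrt (β d/(2*c0)) with hεdef
    have hc0pos : (0:ℝ) < 2*c0 := by linarith
    have hx0 : 0 < β d/(2*c0) := div_pos hβdpos hc0pos
    have hε0 : 0 < ε := Real.sqrt_pos.mpr hx0
    have hεsq : ε^2 = β d/(2*c0) := Real.sq_sqrt hx0.le
    have hβd1 : β d ≤ 1 := le_trans (chain_mono hβmono (le_refl 1) hd1) hβ1
    have hxlt : β d/(2*c0) < 1 := by rw [div_lt_one hc0pos]; linarith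
    have hε1 : ε < 1 := by
      rw [hεdef]
      calc Real.sqrt (β d/(2*c0)) < Real.sqrt 1 := Real.sqrt_lt_sqrt hx0.le hxlt
        _ = 1 := Real.sqrt_one
    obtain ⟨hanti, e, he⟩ := hrearr d hd1
    obtain ⟨hnn, hΛlow⟩ := hVfacts d hd1
    have hbd := lam_ge_beta hβ1 hβmono hα1 hd1 hanti e he
    have hΛpos : 0 < ∑' m, lam d m := lt_of_lt_of_le hdpos hΛlow
    have hnonempty : {n : ℕ | ∑' m : ℕ, lam d (n+m) ≤ ε^2 * ∑' m : ℕ, lam d m}.Nonempty := by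
      have htt := tail_tendsto (hsum d hd1)
      have hevlt := htt.eventually
        (gt_mem_nhds (by positivity : (0:ℝ) < ε^2 * ∑' m, lam d m))
      obtain ⟨n, hn⟩ := hevlt.exists
      exact ⟨n, hn.le⟩
    have hmem : ∑' m : ℕ, lam d (nNOR (lam d) ε + m) ≤ ε^2 * ∑' m : ℕ, lam d m :=
      Nat.sInf_mem hnonempty
    have hdn : (d:ℝ) ≤ (nNOR (lam d) ε : ℝ) := by
      by_cases hcase : nNOR (lam d) ε ≤ 2*d
      · have hlow := tail_lower (hsum d hd1) hnn hbd hcase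
        have hup : ∑' m : ℕ, lam d (nNOR (lam d) ε + m) ≤ ε^2 * (c0 * d) :=
          le_trans hmem (mul_le_mul_of_nonneg_left (hΛup d hd1) (by positivity))
        have hcast : ((2*d+1 - nNOR (lam d) ε : ℕ):ℝ)
            = 2*(d:ℝ)+1-(nNOR (lam d) ε : ℝ) := by
          have hle' : nNOR (lam d) ε ≤ 2*d+1 := by omega
          push_cast [hle']
          ring
        rw [hcast] at hlow
        have hεc : ε^2 * (c0*d) = (d:ℝ)/2 * β d := by
          rw [hεsq]
          field_simp
        have hfin : (2*(d:ℝ)+1-(nNOR (lam d) ε : ℝ)) * β d ≤ (d:ℝ)/2 * β d := by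
          rw [← hεc]
          exact le_trans hlow hup
        have h5 : 2*(d:ℝ)+1-(nNOR (lam d) ε : ℝ) ≤ (d:ℝ)/2 :=
          le_of_mul_le_mul_right hfin hβdpos
        linarith
      · push_neg at hcase
        have h6 : (2*(d:ℝ)) < (nNOR (lam d) ε : ℝ) := by exact_mod_cast hcase
        linarith
    have hb := hSPT d hd1 ε ⟨hε0, hε1⟩
    -- rewrite ε ^ (-p)
    have hεpow : ε ^ (-p) = (2*c0/β d) ^ (p/2) := by
      rw [hεdef, Real.sqrt_eq_rpow, ← Real.rpow_mul hx0.le,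
        show (1/2) * (-p) = -(p/2) by ring,
        Real.rpow_neg hx0.le, ← Real.inv_rpow hx0.le, inv_div]
    have hδd : (0:ℝ) < (d:ℝ)^δ := Real.rpow_pos_of_pos hdpos δ
    have hmono2 : (2*c0/β d) ^ (p/2) ≤ (2*c0 * (d:ℝ)^δ) ^ (p/2) := by
      refine Real.rpow_le_rpow (by positivity) ?_ (by positivity)
      calc 2*c0/β d = 2*c0 * (1/β d) := by ring
        _ ≤ 2*c0 * (d:ℝ)^δ := mul_le_mul_of_nonneg_left h2.le (by linarith)
    have hsplit : (2*c0*(d:ℝ)^δ) ^ (p/2) = (2*c0) ^ (p/2) * ((d:ℝ)^δ) ^ (p/2) :=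
      Real.mul_rpow (by linarith) hδd.le
    have hdd : ((d:ℝ)^δ) ^ (p/2) ≤ (d:ℝ) ^ (1/2 : ℝ) := by
      rw [← Real.rpow_mul hdpos.le]
      refine Real.rpow_le_rpow_of_exponent_le (by linarith) ?_
      have hδcomp : δ * (p/2) = p/(2*(p+1)) := by
        rw [hδdef]
        field_simp
      rw [hδcomp, div_le_div_iff₀ (by linarith) (by norm_num)]
      linarith
    have hhalfpos : 0 < (d:ℝ) ^ (1/2:ℝ) := Real.rpow_pos_of_pos hdpos _
    have hfinal : (d:ℝ) ≤ K * (d:ℝ) ^ (1/2:ℝ) := by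
      calc (d:ℝ) ≤ (nNOR (lam d) ε : ℝ) := hdn
        _ ≤ C * ε ^ (-p) := hb
        _ = C * (2*c0/β d) ^ (p/2) := by rw [hεpow]
        _ ≤ C * ((2*c0) ^ (p/2) * (d:ℝ) ^ (1/2:ℝ)) := by
            refine mul_le_mul_of_nonneg_left ?_ hC
            refine le_trans hmono2 ?_
            rw [hsplit]
            exact mul_le_mul_of_nonneg_left hdd (Real.rpow_nonneg (by linarith) _)
        _ = K * (d:ℝ) ^ (1/2:ℝ) := by rw [hKdef]; ring
    have hsq : (d:ℝ) ^ (1/2:ℝ) * (d:ℝ) ^ (1/2:ℝ) = (d:ℝ) := by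
      rw [← Real.rpow_add hdpos]
      norm_num
    have hdle : (d:ℝ) ^ (1/2:ℝ) ≤ K := by
      refine le_of_mul_le_mul_right ?_ hhalfpos
      rw [hsq]
      exact hfinal
    have hdK2 : (d:ℝ) ≤ K^2 := by
      rw [← hsq, sq]
      exact mul_le_mul hdle hdle hhalfpos.le hK0
    have hNle : (⌈K^2⌉₊ + 1 : ℕ) ≤ d := le_trans (le_max_right _ _) hdN
    have hNR : ((⌈K^2⌉₊ + 1 : ℕ):ℝ) ≤ (d:ℝ) := by exact_mod_cast hNle
    have hceil : (K^2:ℝ) ≤ (⌈K^2⌉₊ : ℝ) := Nat.le_ceil _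
    push_cast at hNR
    linarith
  · -- liminf > 0 → SPT
    intro hA
    -- extract a positive real δ₀ below the liminf
    obtain ⟨t, ht0, htA⟩ := exists_between hA
    have httop : t ≠ ⊤ := htA.ne_top
    have htbot : t ≠ ⊥ := by rintro rfl; exact absurd ht0 (by simp)
    lift t to ℝ using ⟨httop, htbot⟩ with δ0
    have hδ0 : 0 < δ0 := EReal.coe_pos.mp ht0
    have hev : ∀ᶠ d : ℕ in atTop, (δ0 : EReal) <
        ((Real.log (1/β d) / Real.log d : ℝ) : EReal) :=
      Filter.eventually_lt_of_lt_liminf htA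
    obtain ⟨d₀, hd₀⟩ := eventually_atTop.mp hev
    set δ : ℝ := min δ0 (1/2) with hδdef
    have hδpos : 0 < δ := lt_min hδ0 (by norm_num)
    have hδhalf : δ ≤ 1/2 := min_le_right _ _
    set D : ℕ := max d₀ 2 with hDdef
    -- polynomial decay of β
    have hβle : ∀ j : ℕ, D ≤ j → β j ≤ (j : ℝ) ^ (-δ) := by
      intro j hj
      have hj2 : 2 ≤ j := le_trans (le_max_right _ _) hj
      have hjR : (1:ℝ) < j := by exact_mod_cast (by omega : 1 < j)
      have hjpos : (0:ℝ) < j := by linarith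
      have hlogj : 0 < Real.log j := Real.log_pos hjR
      have hβj : 0 < β j := hβpos j (by omega)
      have hx := hd₀ j (le_trans (le_max_left _ _) hj)
      rw [EReal.coe_lt_coe_iff] at hx
      have h1 : δ * Real.log j < Real.log (1/β j) := by
        have h1' : δ0 * Real.log j < Real.log (1/β j) := (lt_div_iff₀ hlogj).mp hx
        have : δ * Real.log j ≤ δ0 * Real.log j :=
          mul_le_mul_of_nonneg_right (min_le_left _ _) hlogj.le
        linarith
      have h2 : (j:ℝ) ^ δ < 1/β j := by
        have hexp := Real.exp_lt_exp.mpr h1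
        rw [Real.exp_log (one_div_pos.mpr hβj)] at hexp
        rw [Real.rpow_def_of_pos hjpos, mul_comm]
        exact hexp
      have hjδpos : 0 < (j:ℝ) ^ δ := Real.rpow_pos_of_pos hjpos _
      have h3 : β j < ((j:ℝ) ^ δ)⁻¹ := by
        have h4 := (lt_div_iff₀ hβj).mp h2
        rw [← one_div]
        rw [lt_div_iff₀ hjδpos]
        linarith [mul_comm (β j) ((j:ℝ) ^ δ)]
      rw [Real.rpow_neg hjpos.le]
      exact h3.le
    set K₀ : ℝ := (D:ℝ) ^ δ with hK₀def
    have hD1 : (1:ℝ) ≤ (D:ℕ) := by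
      have : 1 ≤ D := le_trans (by norm_num) (le_max_right d₀ 2)
      exact_mod_cast this
    have hK₀1 : 1 ≤ K₀ := by
      have := Real.rpow_le_rpow_of_exponent_le hD1 hδpos.le (y := 0)
      rwa [Real.rpow_zero] at this
    have hβall : ∀ j : ℕ, 1 ≤ j → β j ≤ K₀ * (j : ℝ) ^ (-δ) := by
      intro j hj
      have hjpos : (0:ℝ) < j := by exact_mod_cast hj
      by_cases hjD : D ≤ j
      · exact le_trans (hβle j hjD)
          (le_mul_of_one_le_left (Real.rpow_nonneg hjpos.le _) hK₀1)
      · push_neg at hjD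
        have hb1 : β j ≤ 1 := le_trans (chain_mono hβmono (le_refl 1) hj) hβ1
        have hjδ : (j:ℝ) ^ δ ≤ K₀ :=
          Real.rpow_le_rpow hjpos.le (by exact_mod_cast hjD.le) hδpos.le
        have hjδpos : 0 < (j:ℝ) ^ δ := Real.rpow_pos_of_pos hjpos _
        have h1 : (1:ℝ) ≤ K₀ * ((j:ℝ) ^ δ)⁻¹ := by
          rw [← div_eq_mul_inv, le_div_iff₀ hjδpos, one_mul]
          exact hjδ
        rw [Real.rpow_neg hjpos.le]
        exact le_trans hb1 h1
    -- choice of τ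
    have hσ1' : (0:ℝ) < σ 1 := lt_trans one_pos hσ1
    set τ : ℝ := max ((1/(1+δ) + 1)/2) ((1/σ 1 + 1)/2) with hτdef
    have h1δ : (0:ℝ) < 1 + δ := by linarith
    have hfrac1 : 1/(1+δ) < 1 := by rw [div_lt_one h1δ]; linarith
    have hfrac2 : 1/σ 1 < 1 := by rw [div_lt_one hσ1']; linarith
    have hτ1 : τ < 1 := max_lt (by linarith) (by linarith)
    have hτ0 : 0 < τ := lt_of_lt_of_le (by positivity : (0:ℝ) < (1/σ 1 + 1)/2)
      (le_max_right _ _)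
    have hτgt2 : 1/σ 1 < τ := lt_of_lt_of_le (by linarith) (le_max_right _ _)
    have hτσ : 1 < τ * σ 1 := by
      have := (div_lt_iff₀ hσ1').mp hτgt2
      linarith
    have hτgt1 : 1/(1+δ) < τ := lt_of_lt_of_le (by linarith) (le_max_left _ _)
    have hτδ : 1 < τ * (1+δ) := by
      have := (div_lt_iff₀ h1δ).mp hτgt1
      linarith
    set a : ℝ := τ * δ with hadef
    have ha0 : 0 < a := mul_pos hτ0 hδpos
    have ha1 : a < 1 := by
      have hle : a ≤ 1 * (1/2) := by
        rw [hadef]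
        exact mul_le_mul hτ1.le hδhalf hδpos.le one_pos.le
      linarith
    have h1a : (0:ℝ) < 1 - a := by linarith
    have h1aτ : 1 - a ≤ τ := by
      have hexp : τ * (1+δ) = τ + a := by rw [hadef]; ring
      rw [hexp] at hτδ
      linarith
    set Zτ : ℝ := ∑' k : ℕ, 1 / ((k:ℝ) + 1) ^ (τ * σ 1) with hZdef
    have hZs := summable_W hτσ
    have hZnn : 0 ≤ Zτ := tsum_nonneg (fun k => by positivity)
    set A : ℝ := 1 + K₀ ^ τ * (2 * Zτ) / (1 - a) with hAdef
    have hA1 : 1 ≤ A := by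
      have h0 : 0 ≤ K₀ ^ τ * (2 * Zτ) / (1 - a) :=
        div_nonneg (mul_nonneg (Real.rpow_nonneg (by linarith) τ) (by linarith)) h1a.le
      rw [hAdef]
      linarith
    have hA0 : (0:ℝ) < A := by linarith
    -- the τ-moment bound, for every d ≥ 1
    have hMτ : ∀ d : ℕ, 1 ≤ d → Summable (fun m => lam d m ^ τ) ∧
        ∑' m, lam d m ^ τ ≤ A * (d:ℝ) ^ τ := by
      intro d hd
      obtain ⟨hanti, e, he⟩ := hrearr d hd
      have hdR : (1:ℝ) ≤ d := by exact_mod_cast hd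
      have hinlval : korobovVal α β σ d (Sum.inl ()) ^ τ = (d:ℝ) ^ τ := by
        rw [korobov_inl hα1 d]
      have hwb := tsum_unitSum_bound (d := d) (X := (d:ℝ) ^ τ)
        (c := fun j : Fin d => β ((j:ℕ)+1) ^ τ)
        (w := fun k : ℕ => 1 / ((k:ℝ) + 1) ^ (τ * σ 1))
        (fun j => Real.rpow_nonneg (hβpos _ (by omega)).le τ)
        (fun k => by positivity) hZs
        (F := fun i => korobovVal α β σ d i ^ τ)
        (fun i => Real.rpow_nonneg (korobov_nonneg hα hβpos d i) τ)
        (le_of_eq hinlval)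
        (fun p => korobov_inr_rpow_le hβpos hσmono hτ0 p)
      obtain ⟨hFs, hFle⟩ := hwb
      constructor
      · exact (e.summable_iff.mpr hFs).congr (fun m => by
          show korobovVal α β σ d (e m) ^ τ = lam d m ^ τ
          rw [he m])
      · have heq : ∑' m, lam d m ^ τ = ∑' i, korobovVal α β σ d i ^ τ := by
          rw [tsum_congr (fun m => by rw [he m])]
          exact e.tsum_eq (fun i => korobovVal α β σ d i ^ τ)
        rw [heq]
        -- bound the β^τ sum
        have hβτ : ∑ j : Fin d, β ((j:ℕ)+1) ^ τ
            ≤ K₀ ^ τ * ((d:ℝ) ^ (1 - a) / (1 - a)) := by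
          have hterm : ∀ j : Fin d, β ((j:ℕ)+1) ^ τ
              ≤ K₀ ^ τ * (((j:ℕ):ℝ) + 1) ^ (-a) := by
            intro j
            have hjp : (0:ℝ) < ((j:ℕ):ℝ) + 1 := by positivity
            have hb := hβall ((j:ℕ)+1) (by omega)
            have hcast : (((j:ℕ)+1 : ℕ) : ℝ) = ((j:ℕ):ℝ) + 1 := by push_cast; ring
            rw [hcast] at hb
            have h := Real.rpow_le_rpow (hβpos _ (by omega)).le hb hτ0.le
            rwa [Real.mul_rpow (by linarith : (0:ℝ) ≤ K₀) (Real.rpow_nonneg hjp.le _),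
              ← Real.rpow_mul hjp.le, show -δ * τ = -a by rw [hadef]; ring] at h
          calc ∑ j : Fin d, β ((j:ℕ)+1) ^ τ
              ≤ ∑ j : Fin d, K₀ ^ τ * (((j:ℕ):ℝ) + 1) ^ (-a) :=
                Finset.sum_le_sum fun j _ => hterm j
            _ = K₀ ^ τ * ∑ j : Fin d, (((j:ℕ):ℝ) + 1) ^ (-a) := by
                rw [Finset.mul_sum]
            _ ≤ K₀ ^ τ * ((d:ℝ) ^ (1 - a) / (1 - a)) := by
                refine mul_le_mul_of_nonneg_left ?_ (Real.rpow_nonneg (by linarith) τ)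
                have hfin : ∑ j : Fin d, (((j:ℕ):ℝ) + 1) ^ (-a)
                    = ∑ j ∈ Finset.range d, ((j:ℝ) + 1) ^ (-a) :=
                  Fin.sum_univ_eq_sum_range (fun j => ((j:ℝ) + 1) ^ (-a)) d
                have hIcc : ∑ j ∈ Finset.range d, ((j:ℝ) + 1) ^ (-a)
                    = ∑ j ∈ Finset.Icc 1 d, (j:ℝ) ^ (-a) := by
                  rw [← Finset.Ico_add_one_right_eq_Icc, Finset.sum_Ico_eq_sum_range]
                  refine Finset.sum_congr (by norm_num) fun j _ => ?_
                  push_cast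
                  ring_nf
                rw [hfin, hIcc]
                exact sum_rpow_neg_le ha0 ha1 d
        calc ∑' i, korobovVal α β σ d i ^ τ
            ≤ (d:ℝ) ^ τ + (∑ j : Fin d, β ((j:ℕ)+1) ^ τ) * (2 * Zτ) := hFle
          _ ≤ (d:ℝ) ^ τ + K₀ ^ τ * ((d:ℝ) ^ (1 - a) / (1 - a)) * (2 * Zτ) := by
              refine add_le_add_right (mul_le_mul_of_nonneg_right hβτ (by linarith)) _
          _ ≤ (d:ℝ) ^ τ + K₀ ^ τ * ((d:ℝ) ^ τ / (1 - a)) * (2 * Zτ) := by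
              have hdd : (d:ℝ) ^ (1 - a) ≤ (d:ℝ) ^ τ :=
                Real.rpow_le_rpow_of_exponent_le hdR h1aτ
              have hK₀τ : (0:ℝ) ≤ K₀ ^ τ := Real.rpow_nonneg (by linarith) τ
              gcongr
          _ = A * (d:ℝ) ^ τ := by rw [hAdef]; ring
    -- assembly of the SPT bound
    have h1τ : (0:ℝ) < 1 - τ := by linarith
    set q : ℝ := (1 - τ)/τ with hqdef
    have hq0 : 0 < q := div_pos h1τ hτ0
    set p' : ℝ := 2 * τ/(1 - τ) with hp'def
    have hp'0 : 0 ≤ p' := by positivity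
    set B : ℝ := A ^ (1/(1 - τ)) with hBdef
    have hB1 : 1 ≤ B := by
      have := Real.rpow_le_rpow_of_exponent_le hA1 (by positivity : (0:ℝ) ≤ 1/(1-τ)) (y := 0)
      rwa [Real.rpow_zero] at this
    refine ⟨B + 1, p', by linarith, hp'0, ?_⟩
    intro d hd ε hε
    obtain ⟨hε0, hε1⟩ := hε
    obtain ⟨hanti, e, he⟩ := hrearr d hd
    obtain ⟨hnn, hΛlow⟩ := hVfacts d hd
    obtain ⟨hMs, hMle⟩ := hMτ d hd
    have hdR : (1:ℝ) ≤ d := by exact_mod_cast hd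
    set y : ℝ := B * ε ^ (-p') with hydef
    have hεp : 0 < ε ^ (-p') := Real.rpow_pos_of_pos hε0 _
    have hy0 : 0 < y := mul_pos (by linarith) hεp
    set n₀ : ℕ := ⌈y⌉₊ with hn₀def
    have hn₀y : y ≤ (n₀:ℝ) := Nat.le_ceil y
    have htail := tau_tail_bound hτ0 hτ1 hanti hnn (hsum d hd) hMs n₀
    have hMnn : (0:ℝ) ≤ ∑' m, lam d m ^ τ :=
      tsum_nonneg (fun m => Real.rpow_nonneg (hnn m) τ)
    have hMpow : (∑' m, lam d m ^ τ) ^ (1/τ) ≤ A ^ (1/τ) * (d:ℝ) := by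
      have h := Real.rpow_le_rpow hMnn hMle (by positivity : (0:ℝ) ≤ 1/τ)
      rwa [Real.mul_rpow hA0.le (Real.rpow_nonneg (by positivity) τ),
        ← Real.rpow_mul (by positivity : (0:ℝ) ≤ (d:ℝ)), mul_one_div,
        div_self hτ0.ne', Real.rpow_one] at h
    have hApos : (0:ℝ) < A ^ (1/τ) := Real.rpow_pos_of_pos hA0 _
    have hy_pow : y ^ q = A ^ (1/τ) * ε ^ (-(2:ℝ)) := by
      rw [hydef, Real.mul_rpow (by linarith : (0:ℝ) ≤ B) hεp.le, hBdef,
        ← Real.rpow_mul hA0.le, ← Real.rpow_mul hε0.le]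
      congr 1
      · congr 1
        rw [hqdef]
        field_simp
      · congr 1
        rw [hqdef, hp'def]
        field_simp
    have hmono : ((n₀:ℝ) + 1) ^ (-q) ≤ y ^ (-q) :=
      Real.rpow_le_rpow_of_nonpos hy0 (by linarith) (by linarith)
    have hyq : y ^ (-q) = (A ^ (1/τ))⁻¹ * ε ^ 2 := by
      rw [Real.rpow_neg hy0.le, hy_pow, mul_inv]
      congr 1
      rw [Real.rpow_neg hε0.le, inv_inv]
      rw [show ((2:ℝ)) = ((2:ℕ):ℝ) by norm_num, Real.rpow_natCast]
    have hmem : n₀ ∈ {n : ℕ | ∑' m, lam d (n + m) ≤ ε ^ 2 * ∑' m, lam d m} := by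
      show ∑' m, lam d (n₀ + m) ≤ ε ^ 2 * ∑' m, lam d m
      calc ∑' m, lam d (n₀ + m)
          ≤ (∑' m, lam d m ^ τ) ^ (1/τ) * ((n₀:ℝ) + 1) ^ (-((1 - τ)/τ)) := htail
        _ ≤ (A ^ (1/τ) * (d:ℝ)) * y ^ (-q) := by
            rw [show -((1 - τ)/τ) = -q by rw [hqdef]]
            exact mul_le_mul hMpow hmono (Real.rpow_nonneg (by positivity) _)
              (by positivity)
        _ = ε ^ 2 * (d:ℝ) := by
            rw [hyq]
            field_simp
        _ ≤ ε ^ 2 * ∑' m, lam d m := by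
            refine mul_le_mul_of_nonneg_left hΛlow (by positivity)
    have hle : nNOR (lam d) ε ≤ n₀ := Nat.sInf_le hmem
    have hεp1 : (1:ℝ) ≤ ε ^ (-p') :=
      Real.one_le_rpow_of_pos_of_le_one_of_nonpos hε0 hε1.le (by linarith)
    calc (nNOR (lam d) ε : ℝ) ≤ (n₀ : ℝ) := by exact_mod_cast hle
      _ ≤ y + 1 := (Nat.ceil_lt_add_one hy0.le).le
      _ ≤ (B + 1) * ε ^ (-p') := by
          rw [hydef]
          calc B * ε ^ (-p') + 1 ≤ B * ε ^ (-p') + ε ^ (-p') := by linarith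
            _ = (B + 1) * ε ^ (-p') := by ring
end

section
/- Let (β_j)_{j∈ℕ} be a non-increasing sequence of positive reals with Σ_{j=1}^∞ β_j = ∞, and let τ ∈ (0,1). Then lim_{d→∞} (Σ_{j=1}^d β_j^τ)^{1/τ} / (Σ_{j=1}^d β_j) = +∞. -/
open Filter Set

/-- (Stolz-theorem step in the proof of Theorem 2.2.) If
`(β_j)` is a non-increasing sequence of positive reals with divergent series
`∑_{j=1}^∞ β_j = ∞`, and `τ ∈ (0,1)`, then
`(∑_{j=1}^d β_j^τ)^{1/τ} / ∑_{j=1}^d β_j → +∞` as `d → ∞`. -/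
theorem tendsto_pow_sum_ratio_atTop (β : ℕ → ℝ) (τ : ℝ)
    (hβpos : ∀ j : ℕ, 1 ≤ j → 0 < β j)
    (hβmono : ∀ j : ℕ, 1 ≤ j → β (j + 1) ≤ β j)
    (hdiv : Filter.Tendsto (fun d : ℕ => ∑ j ∈ Finset.Icc 1 d, β j)
      Filter.atTop Filter.atTop)
    (hτ : τ ∈ Set.Ioo (0 : ℝ) 1) :
    Filter.Tendsto
      (fun d : ℕ =>
        (∑ j ∈ Finset.Icc 1 d, β j ^ τ) ^ (1 / τ) / ∑ j ∈ Finset.Icc 1 d, β j)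
      Filter.atTop Filter.atTop := by
  obtain ⟨hτ0, hτ1⟩ := hτ
  have hb1 : 0 < β 1 := hβpos 1 le_rfl
  have hle : ∀ j : ℕ, 1 ≤ j → β j ≤ β 1 := by
    intro j hj
    induction j with
    | zero => omega
    | succ n ih =>
      rcases Nat.lt_or_ge 1 (n + 1) with h | h
      · have hn : 1 ≤ n := by omega
        exact (hβmono n hn).trans (ih hn)
      · have : n + 1 = 1 := by omega
        rw [this]
  set c : ℝ := β 1 ^ ((τ - 1) / τ) with hc
  have hcpos : 0 < c := Real.rpow_pos_of_pos hb1 _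
  set S : ℕ → ℝ := fun d => ∑ j ∈ Finset.Icc 1 d, β j with hS
  have hSpos : ∀ d : ℕ, 1 ≤ d → 0 < S d := by
    intro d hd
    apply Finset.sum_pos
    · intro j hj
      exact hβpos j (Finset.mem_Icc.mp hj).1
    · exact ⟨1, Finset.mem_Icc.mpr ⟨le_rfl, hd⟩⟩
  have key : ∀ d : ℕ, 1 ≤ d →
      c * S d ^ (1 / τ - 1) ≤ (∑ j ∈ Finset.Icc 1 d, β j ^ τ) ^ (1 / τ) / S d := by
    intro d hd
    have hSd := hSpos d hd
    have hT : β 1 ^ (τ - 1) * S d ≤ ∑ j ∈ Finset.Icc 1 d, β j ^ τ := by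
      rw [Finset.mul_sum]
      apply Finset.sum_le_sum
      intro j hj
      have hj1 := (Finset.mem_Icc.mp hj).1
      have hbj : 0 < β j := hβpos j hj1
      have h1 : β 1 ^ (τ - 1) ≤ β j ^ (τ - 1) :=
        Real.rpow_le_rpow_of_nonpos hbj (hle j hj1) (by linarith)
      calc β 1 ^ (τ - 1) * β j ≤ β j ^ (τ - 1) * β j := by
            exact mul_le_mul_of_nonneg_right h1 hbj.le
        _ = β j ^ τ := by
            nth_rewrite 2 [← Real.rpow_one (β j)]
            rw [← Real.rpow_add hbj]
            norm_num
    have hTpow : (β 1 ^ (τ - 1) * S d) ^ (1 / τ) ≤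
        (∑ j ∈ Finset.Icc 1 d, β j ^ τ) ^ (1 / τ) := by
      apply Real.rpow_le_rpow _ hT (by positivity)
      positivity
    have heq : (β 1 ^ (τ - 1) * S d) ^ (1 / τ) = c * S d ^ (1 / τ) := by
      rw [Real.mul_rpow (by positivity) hSd.le, hc, ← Real.rpow_mul hb1.le]
      congr 1
      ring
    rw [div_eq_mul_inv]
    calc c * S d ^ (1 / τ - 1) = c * S d ^ (1 / τ) * (S d)⁻¹ := by
          rw [Real.rpow_sub hSd, Real.rpow_one, div_eq_mul_inv, mul_assoc]
      _ ≤ (∑ j ∈ Finset.Icc 1 d, β j ^ τ) ^ (1 / τ) * (S d)⁻¹ := by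
          apply mul_le_mul_of_nonneg_right _ (by positivity)
          rw [← heq]; exact hTpow
  have hτexp : 0 < 1 / τ - 1 := by
    have : 1 < 1 / τ := by rw [lt_div_iff₀ hτ0]; linarith
    linarith
  have hlim : Tendsto (fun d : ℕ => c * S d ^ (1 / τ - 1)) atTop atTop := by
    apply Tendsto.const_mul_atTop hcpos
    exact (tendsto_rpow_atTop hτexp).comp hdiv
  exact tendsto_atTop_mono' atTop
    (Filter.eventually_atTop.mpr ⟨1, fun d hd => key d hd⟩) hlim
end

section
/- Let 1 ≥ β_1 ≥ β_2 ≥ ⋯ > 0, let (α_j) be non-negative reals, and suppose there is a constant c > 0 with Σ_{j=1}^d α_j ≤ c·d·α_d for every d ∈ ℕ, and that α_d > 0 for all d. If there exist τ ∈ (0,1) and C > 0 such that (Σ_{j=1}^d β_j^τ)^{1/τ} ≤ C · Σ_{j=1}^d α_j for all d ∈ ℕ, then α_d/β_d ≥ (cC)^{−1} · d^{(1−τ)/τ} for all d ∈ ℕ, and consequently liminf_{d→∞} (ln(α_d/β_d))/(ln d) ≥ (1−τ)/τ > 0. -/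
open Filter Set Topology

/-- (Necessity part of the proof of Theorem 2.3.) Let
`1 ≥ β_1 ≥ β_2 ≥ ⋯ > 0`, let `α_j ≥ 0` with `α_d > 0`, and suppose
`∑_{j=1}^d α_j ≤ c d α_d` for some `c > 0` and all `d ≥ 1`. If there exist
`τ ∈ (0,1)` and `C > 0` with `(∑_{j=1}^d β_j^τ)^{1/τ} ≤ C ∑_{j=1}^d α_j` for
all `d ≥ 1`, then `α_d/β_d ≥ (cC)⁻¹ d^{(1-τ)/τ}` for all `d ≥ 1`, and
consequently `liminf_{d→∞} ln(α_d/β_d)/ln d ≥ (1-τ)/τ > 0`. -/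
theorem liminf_ratio_ge (α β : ℕ → ℝ)
    (hβ1 : β 1 ≤ 1)
    (hβpos : ∀ j : ℕ, 1 ≤ j → 0 < β j)
    (hβmono : ∀ j : ℕ, 1 ≤ j → β (j + 1) ≤ β j)
    (hα : ∀ j : ℕ, 1 ≤ j → 0 ≤ α j)
    (hαpos : ∀ d : ℕ, 1 ≤ d → 0 < α d)
    (c : ℝ) (hc : 0 < c)
    (hcd : ∀ d : ℕ, 1 ≤ d → ∑ j ∈ Finset.Icc 1 d, α j ≤ c * d * α d)
    (τ C : ℝ) (hτ : τ ∈ Set.Ioo (0 : ℝ) 1) (hC : 0 < C)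
    (hbound : ∀ d : ℕ, 1 ≤ d →
      (∑ j ∈ Finset.Icc 1 d, β j ^ τ) ^ (1 / τ) ≤ C * ∑ j ∈ Finset.Icc 1 d, α j) :
    (∀ d : ℕ, 1 ≤ d → (c * C)⁻¹ * (d : ℝ) ^ ((1 - τ) / τ) ≤ α d / β d) ∧
    (((1 - τ) / τ : ℝ) : EReal) ≤
      (Filter.atTop.liminf fun d : ℕ =>
        ((Real.log (α d / β d) / Real.log d : ℝ) : EReal)) ∧
    0 < (1 - τ) / τ := by
  obtain ⟨hτ0, hτ1⟩ := hτ
  set θ : ℝ := (1 - τ) / τ with hθ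
  have hθpos : 0 < θ := div_pos (by linarith) hτ0
  have hcC : 0 < c * C := mul_pos hc hC
  have hK : 0 < (c * C)⁻¹ := inv_pos.mpr hcC
  have hmono : ∀ j k : ℕ, 1 ≤ j → j ≤ k → β k ≤ β j := by
    intro j k hj hjk
    induction k, hjk using Nat.le_induction with
    | base => exact le_refl _
    | succ n hn ih => exact le_trans (hβmono n (le_trans hj hn)) ih
  have key : ∀ d : ℕ, 1 ≤ d → (c * C)⁻¹ * (d : ℝ) ^ θ ≤ α d / β d := by
    intro d hd
    have hdR : (1 : ℝ) ≤ (d : ℝ) := by exact_mod_cast hd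
    have hdpos : (0 : ℝ) < (d : ℝ) := by linarith
    have hβd : 0 < β d := hβpos d hd
    have hsum : (d : ℝ) * β d ^ τ ≤ ∑ j ∈ Finset.Icc 1 d, β j ^ τ := by
      have hterm : ∀ j ∈ Finset.Icc 1 d, β d ^ τ ≤ β j ^ τ := by
        intro j hj
        rw [Finset.mem_Icc] at hj
        exact Real.rpow_le_rpow hβd.le (hmono j d hj.1 hj.2) hτ0.le
      calc (d : ℝ) * β d ^ τ = ∑ _j ∈ Finset.Icc 1 d, β d ^ τ := by
            rw [Finset.sum_const, Nat.card_Icc]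
            simp [nsmul_eq_mul]
        _ ≤ _ := Finset.sum_le_sum hterm
    have hL : ((d : ℝ) * β d ^ τ) ^ (1 / τ) = (d : ℝ) ^ (1 / τ) * β d := by
      rw [Real.mul_rpow hdpos.le (Real.rpow_nonneg hβd.le _),
        ← Real.rpow_mul hβd.le, mul_one_div, div_self (ne_of_gt hτ0), Real.rpow_one]
    have h1 : (d : ℝ) ^ (1 / τ) * β d ≤ C * ∑ j ∈ Finset.Icc 1 d, α j := by
      rw [← hL]
      exact le_trans
        (Real.rpow_le_rpow (by positivity) hsum (by positivity)) (hbound d hd)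
    have h2 : (d : ℝ) ^ (1 / τ) * β d ≤ C * (c * d * α d) :=
      le_trans h1 (mul_le_mul_of_nonneg_left (hcd d hd) hC.le)
    have hrw : (d : ℝ) ^ (1 / τ) = (d : ℝ) ^ θ * d := by
      rw [show (1 / τ) = θ + 1 by rw [hθ]; field_simp; ring,
        Real.rpow_add hdpos, Real.rpow_one]
    rw [hrw] at h2
    have h4 : ((d : ℝ) ^ θ * β d) * d ≤ (C * c * α d) * d := by
      calc ((d : ℝ) ^ θ * β d) * d = (d : ℝ) ^ θ * d * β d := by ring
        _ ≤ C * (c * d * α d) := h2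
        _ = (C * c * α d) * d := by ring
    have h3 : (d : ℝ) ^ θ * β d ≤ C * c * α d := le_of_mul_le_mul_right h4 hdpos
    rw [le_div_iff₀ hβd, show (c * C)⁻¹ * (d : ℝ) ^ θ * β d
        = ((d : ℝ) ^ θ * β d) / (c * C) by ring, div_le_iff₀ hcC]
    nlinarith [h3]
  refine ⟨key, ?_, hθpos⟩
  have hev : ∀ᶠ d : ℕ in atTop,
      ((θ + Real.log ((c * C)⁻¹) / Real.log d : ℝ) : EReal) ≤
        ((Real.log (α d / β d) / Real.log d : ℝ) : EReal) := by
    filter_upwards [eventually_ge_atTop 2] with d hd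
    have hd1 : 1 ≤ d := le_trans one_le_two hd
    have hdR : (1 : ℝ) < (d : ℝ) := by exact_mod_cast lt_of_lt_of_le one_lt_two hd
    have hdpos : (0 : ℝ) < (d : ℝ) := by linarith
    have hlogd : 0 < Real.log d := Real.log_pos hdR
    have hpow : 0 < (d : ℝ) ^ θ := Real.rpow_pos_of_pos hdpos θ
    have hpos : 0 < (c * C)⁻¹ * (d : ℝ) ^ θ := mul_pos hK hpow
    have hge := key d hd1
    have hlog : Real.log ((c * C)⁻¹) + θ * Real.log d ≤ Real.log (α d / β d) := by
      have h := Real.log_le_log hpos hge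
      rwa [Real.log_mul (ne_of_gt hK) (ne_of_gt hpow), Real.log_rpow hdpos] at h
    rw [EReal.coe_le_coe_iff]
    have h5 : (Real.log ((c * C)⁻¹) + θ * Real.log d) / Real.log d
        ≤ Real.log (α d / β d) / Real.log d := (div_le_div_iff_of_pos_right hlogd).mpr hlog
    calc θ + Real.log ((c * C)⁻¹) / Real.log d
        = (Real.log ((c * C)⁻¹) + θ * Real.log d) / Real.log d := by
          field_simp; ring
      _ ≤ _ := h5
  have htendR : Tendsto (fun d : ℕ => θ + Real.log ((c * C)⁻¹) / Real.log d)
      atTop (𝓝 θ) := by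
    have h1 : Tendsto (fun d : ℕ => Real.log ((c * C)⁻¹) / Real.log d) atTop (𝓝 0) :=
      Tendsto.div_atTop tendsto_const_nhds
        (Real.tendsto_log_atTop.comp tendsto_natCast_atTop_atTop)
    simpa using tendsto_const_nhds.add h1
  have htend : Tendsto (fun d : ℕ =>
      ((θ + Real.log ((c * C)⁻¹) / Real.log d : ℝ) : EReal)) atTop (𝓝 (θ : EReal)) :=
    EReal.tendsto_coe.mpr htendR
  calc ((θ : ℝ) : EReal)
      = Filter.atTop.liminf (fun d : ℕ =>
          ((θ + Real.log ((c * C)⁻¹) / Real.log d : ℝ) : EReal)) := htend.liminf_eq.symm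
    _ ≤ _ := liminf_le_liminf hev
end
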